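/- arXiv:2312.04006 — 4 statements merged into one kernel-verified Lean document; each statement's English description precedes it below -/
import Mathlib

section
/- For any set-valued random variable F : Ω → K(X) with S^p_F nonempty (X separable Banach), there exists a countable family {f^i : i ∈ ℕ} ⊆ S^p_F such that F(ω) = cl{f^i(ω) : i ∈ ℕ} (closure in X) for all ω ∈ Ω; moreover S^p_F equals the closed decomposable hull of {f^i : i ∈ ℕ} in L^p(Ω; X). -/
open MeasureTheory Set Filter Topology Bornology
open scoped ENNReal NNReal Pointwise

noncomputable section

/-- A set-valued random variable w.r.t. the σ-algebra `𝒜`: nonempty closed values and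
measurability of hitting sets of closed sets. -/
def IsSVRV {Ω X : Type*} [TopologicalSpace X] (𝒜 : MeasurableSpace Ω) (F : Ω → Set X) : Prop :=
  (∀ ω, (F ω).Nonempty ∧ IsClosed (F ω)) ∧
    ∀ C : Set X, IsClosed C → MeasurableSet[𝒜] {ω | (F ω ∩ C).Nonempty}

/-- The set `S^p_F(𝒜)` of `𝒜`-measurable `p`-integrable selections of `F`,
as a subset of `Lp X p μ`. -/
def sel {Ω X : Type*} {m : MeasurableSpace Ω} [NormedAddCommGroup X]
    (𝒜 : MeasurableSpace Ω) (μ : @MeasureTheory.Measure Ω m) (p : ℝ≥0∞) (F : Ω → Set X) :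
    Set (Lp X p μ) :=
  {f | AEStronglyMeasurable[𝒜] f μ ∧ ∀ᵐ ω ∂μ, f ω ∈ F ω}

/-- Decomposability of a family of `Lp` functions w.r.t. the σ-algebra `𝒜`:
`1_A f₁ + 1_{Ω∖A} f₂ ∈ M` for all `f₁ f₂ ∈ M` and `A` `𝒜`-measurable. -/
def Decomp {Ω X : Type*} {m : MeasurableSpace Ω} [NormedAddCommGroup X]
    (𝒜 : MeasurableSpace Ω) (μ : @MeasureTheory.Measure Ω m) (p : ℝ≥0∞)
    (M : Set (Lp X p μ)) : Prop :=
  ∀ f₁ ∈ M, ∀ f₂ ∈ M, ∀ A : Set Ω, MeasurableSet[𝒜] A →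
    ∃ g ∈ M, ∀ᵐ ω ∂μ, (ω ∈ A → g ω = f₁ ω) ∧ (ω ∉ A → g ω = f₂ ω)

/-- The closed decomposable hull of `M` in `Lp X p μ`, w.r.t. the σ-algebra `𝒜`:
the smallest closed `𝒜`-decomposable set containing `M`. -/
def decClosure {Ω X : Type*} {m : MeasurableSpace Ω} [NormedAddCommGroup X]
    (𝒜 : MeasurableSpace Ω) (μ : @MeasureTheory.Measure Ω m) (p : ℝ≥0∞) [Fact (1 ≤ p)]
    (M : Set (Lp X p μ)) : Set (Lp X p μ) :=
  ⋂₀ {N : Set (Lp X p μ) | M ⊆ N ∧ IsClosed N ∧ Decomp 𝒜 μ p N}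

/-- The set of conditional expectations `E[f|𝒜]` of members `f` of `M ⊆ Lp X p μ`. -/
def ceSel {Ω X : Type*} {m : MeasurableSpace Ω} [NormedAddCommGroup X]
    [NormedSpace ℝ X] [CompleteSpace X]
    (𝒜 : MeasurableSpace Ω) (μ : @MeasureTheory.Measure Ω m) (p : ℝ≥0∞)
    (M : Set (Lp X p μ)) : Set (Lp X p μ) :=
  {h | ∃ f ∈ M, ⇑h =ᵐ[μ] μ[(⇑f)|𝒜]}

/-- Set-valued `𝔽`-submartingale (Hiai–Umegaki), expressed through the selection
characterization of the set-valued conditional expectation: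
`S_{F_s}(ℱ s) ⊆ S_{E[F_t|ℱ s]}(ℱ s) = cl{E[f|ℱ s] : f ∈ S_{F_t}(ℱ t)}`. -/
def SVSubmartingale {Ω X ι : Type*} [Preorder ι] {m : MeasurableSpace Ω}
    [NormedAddCommGroup X] [NormedSpace ℝ X] [CompleteSpace X]
    (ℱ : MeasureTheory.Filtration ι m) (μ : @MeasureTheory.Measure Ω m) (p : ℝ≥0∞)
    [Fact (1 ≤ p)] (F : ι → Ω → Set X) : Prop :=
  ∀ s t : ι, s ≤ t →
    sel (ℱ s) μ p (F s) ⊆ closure (ceSel (ℱ s) μ p (sel (ℱ t) μ p (F t)))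

/-- Set-valued `𝔽`-martingale (Hiai–Umegaki), via the selection characterization
`S_{F_s}(ℱ s) = S_{E[F_t|ℱ s]}(ℱ s) = cl{E[f|ℱ s] : f ∈ S_{F_t}(ℱ t)}`. -/
def SVMartingale {Ω X ι : Type*} [Preorder ι] {m : MeasurableSpace Ω}
    [NormedAddCommGroup X] [NormedSpace ℝ X] [CompleteSpace X]
    (ℱ : MeasureTheory.Filtration ι m) (μ : @MeasureTheory.Measure Ω m) (p : ℝ≥0∞)
    [Fact (1 ≤ p)] (F : ι → Ω → Set X) : Prop :=
  ∀ s t : ι, s ≤ t →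
    sel (ℱ s) μ p (F s) = closure (ceSel (ℱ s) μ p (sel (ℱ t) μ p (F t)))

/-- The Aumann expectation `E[F] = cl{∫ f dμ : f ∈ S¹_F}` of a set-valued random variable. -/
def aumannExp {Ω X : Type*} {m : MeasurableSpace Ω} [NormedAddCommGroup X]
    [NormedSpace ℝ X] [CompleteSpace X]
    (μ : @MeasureTheory.Measure Ω m) (F : Ω → Set X) : Set X :=
  closure {x | ∃ f ∈ sel m μ 1 F, ∫ ω, f ω ∂μ = x}

/-- Reflexivity of a normed space: the canonical embedding into the double dual
is surjective. -/
def IsReflexive (X : Type*) [NormedAddCommGroup X] [NormedSpace ℝ X] : Prop :=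
  Function.Surjective ⇑(NormedSpace.inclusionInDoubleDual ℝ X)

section AuxSelection
open Metric

theorem selection_aux {Ω X : Type*} [MeasurableSpace Ω] [NormedAddCommGroup X]
    [TopologicalSpace.SeparableSpace X] [MeasurableSpace X] [BorelSpace X] [CompleteSpace X]
    [Nonempty X]
    (G : Ω → Set X) (hval : ∀ ω, (G ω).Nonempty ∧ IsClosed (G ω))
    (hmeas : ∀ (x : X) (r : ℝ), MeasurableSet {ω | (G ω ∩ Metric.ball x r).Nonempty}) :
    ∃ g : Ω → X, StronglyMeasurable g ∧ ∀ ω, g ω ∈ G ω := by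
  classical
  haveI : SecondCountableTopology X := UniformSpace.secondCountable_of_separable X
  set x : ℕ → X := TopologicalSpace.denseSeq X with hxdef
  have hx : DenseRange x := TopologicalSpace.denseRange_denseSeq X
  set r : ℕ → ℝ := fun j => (2 : ℝ)⁻¹ ^ j with hrdef
  have hrpos : ∀ j, 0 < r j := fun j => pow_pos (by norm_num) j
  set u : ℕ → Ω → X := fun j =>
    Nat.rec (motive := fun _ => Ω → X)
      (fun ω =>
        if h : ∃ n, (G ω ∩ ball (x n) (r 0)).Nonempty then x (Nat.find h)
        else Classical.arbitrary X)
      (fun j uj ω =>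
        if h : ∃ n, (G ω ∩ ball (x n) (r (j + 1))).Nonempty ∧
            dist (x n) (uj ω) < r j + r (j + 1) then x (Nat.find h)
        else uj ω) j with hudef
  have hinv : ∀ j ω, ∃ n, u j ω = x n ∧ (G ω ∩ ball (x n) (r j)).Nonempty := by
    intro j
    induction j with
    | zero =>
      intro ω
      obtain ⟨y, hy⟩ := (hval ω).1
      obtain ⟨n, hn⟩ := hx.exists_dist_lt y (hrpos 0)
      have h : ∃ n, (G ω ∩ ball (x n) (r 0)).Nonempty :=
        ⟨n, ⟨y, hy, by simpa [mem_ball] using hn⟩⟩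
      refine ⟨Nat.find h, ?_, Nat.find_spec h⟩
      show (if h : _ then x (Nat.find h) else _) = _
      rw [dif_pos h]
    | succ j ih =>
      intro ω
      obtain ⟨n, hun, y, hyG, hyb⟩ := ih ω
      obtain ⟨m, hm⟩ := hx.exists_dist_lt y (hrpos (j + 1))
      have h : ∃ m, (G ω ∩ ball (x m) (r (j + 1))).Nonempty ∧
          dist (x m) (u j ω) < r j + r (j + 1) := by
        refine ⟨m, ⟨y, hyG, by simpa [mem_ball] using hm⟩, ?_⟩
        rw [hun]
        calc dist (x m) (x n) ≤ dist (x m) y + dist y (x n) := dist_triangle _ _ _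
          _ < r (j + 1) + r j := by
              have := mem_ball.mp hyb
              rw [dist_comm] at hm
              linarith
          _ = r j + r (j + 1) := by ring
      refine ⟨Nat.find h, ?_, (Nat.find_spec h).1⟩
      show (if h : _ then x (Nat.find h) else _) = _
      rw [dif_pos h]
  -- existence used at successor steps
  have hex : ∀ j ω, ∃ m, (G ω ∩ ball (x m) (r (j + 1))).Nonempty ∧
      dist (x m) (u j ω) < r j + r (j + 1) := by
    intro j ω
    obtain ⟨n, hun, y, hyG, hyb⟩ := hinv j ω
    obtain ⟨m, hm⟩ := hx.exists_dist_lt y (hrpos (j + 1))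
    refine ⟨m, ⟨y, hyG, by simpa [mem_ball] using hm⟩, ?_⟩
    rw [hun]
    calc dist (x m) (x n) ≤ dist (x m) y + dist y (x n) := dist_triangle _ _ _
      _ < r (j + 1) + r j := by
          have := mem_ball.mp hyb
          rw [dist_comm] at hm
          linarith
      _ = r j + r (j + 1) := by ring
  have hsucc : ∀ j ω, u (j + 1) ω = x (Nat.find (hex j ω)) := by
    intro j ω
    show (if h : _ then x (Nat.find h) else _) = _
    rw [dif_pos (hex j ω)]
  have hdist : ∀ j ω, dist (u (j + 1) ω) (u j ω) < r j + r (j + 1) := by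
    intro j ω
    rw [hsucc j ω]
    exact (Nat.find_spec (hex j ω)).2
  -- Cauchy
  have hcauchy : ∀ ω, CauchySeq fun j => u j ω := by
    intro ω
    refine cauchySeq_of_le_geometric 2⁻¹ 2 (by norm_num) fun j => ?_
    rw [dist_comm]
    have := (hdist j ω).le
    have h1 : r j + r (j + 1) ≤ 2 * 2⁻¹ ^ j := by
      simp only [hrdef, pow_succ]
      nlinarith [pow_pos (show (0:ℝ) < 2⁻¹ by norm_num) j]
    exact this.trans h1
  choose g hg using fun ω => cauchySeq_tendsto_of_complete (hcauchy ω)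
  have hrlim : Tendsto r atTop (𝓝 0) :=
    tendsto_pow_atTop_nhds_zero_of_lt_one (by norm_num) (by norm_num)
  refine ⟨g, ?_, ?_⟩
  · -- strong measurability
    have humeas : ∀ j, Measurable (u j) := by
      intro j
      induction j with
      | zero =>
        have hall : ∀ ω, ∃ n, (G ω ∩ ball (x n) (r 0)).Nonempty := by
          intro ω
          obtain ⟨y, hy⟩ := (hval ω).1
          obtain ⟨n, hn⟩ := hx.exists_dist_lt y (hrpos 0)
          exact ⟨n, ⟨y, hy, by simpa [mem_ball] using hn⟩⟩
        have : u 0 = fun ω => x (Nat.find (hall ω)) := by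
          funext ω
          show (if h : _ then x (Nat.find h) else _) = _
          rw [dif_pos (hall ω)]
        rw [this]
        exact (measurable_from_top (f := x)).comp
          (measurable_find _ fun n => hmeas (x n) (r 0))
      | succ j ih =>
        have : u (j + 1) = fun ω => x (Nat.find (hex j ω)) := funext fun ω => hsucc j ω
        rw [this]
        refine (measurable_from_top (f := x)).comp (measurable_find _ fun n => ?_)
        have h1 : MeasurableSet {ω | (G ω ∩ ball (x n) (r (j + 1))).Nonempty} :=
          hmeas (x n) (r (j + 1))
        have h2 : MeasurableSet {ω | dist (x n) (u j ω) < r j + r (j + 1)} := by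
          have : {ω | dist (x n) (u j ω) < r j + r (j + 1)} =
              u j ⁻¹' {z | dist (x n) z < r j + r (j + 1)} := rfl
          rw [this]
          exact ih (isOpen_lt (continuous_const.dist continuous_id) continuous_const).measurableSet
        exact h1.inter h2
    have hpt : ∀ ω, Tendsto (fun j => u j ω) atTop (𝓝 (g ω)) := hg
    exact (measurable_of_tendsto_metrizable (fun j => humeas j)
      (tendsto_pi_nhds.mpr hpt)).stronglyMeasurable
  · intro ω
    rw [← (hval ω).2.closure_eq]
    rw [Metric.mem_closure_iff]
    intro ε hε
    have h1 : ∀ᶠ j in atTop, dist (u j ω) (g ω) < ε / 2 :=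
      (tendsto_iff_dist_tendsto_zero.mp (hg ω)).eventually_lt_const (by linarith) |>.mono
        fun j hj => hj
    have h2 : ∀ᶠ j in atTop, r j < ε / 2 :=
      hrlim.eventually_lt_const (by linarith)
    obtain ⟨j, hj1, hj2⟩ := (h1.and h2).exists
    obtain ⟨n, hun, y, hyG, hyb⟩ := hinv j ω
    refine ⟨y, hyG, ?_⟩
    have hyu : dist y (u j ω) < r j := by rw [hun]; exact mem_ball.mp hyb
    calc dist (g ω) y ≤ dist y (u j ω) + dist (u j ω) (g ω) := by
          rw [dist_comm (g ω) y]; exact dist_triangle _ _ _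
      _ < r j + ε / 2 := add_lt_add hyu hj1
      _ < ε := by linarith

/-- Castaing representation. -/
theorem castaing_aux {Ω X : Type*} [MeasurableSpace Ω] [NormedAddCommGroup X]
    [TopologicalSpace.SeparableSpace X] [MeasurableSpace X] [BorelSpace X] [CompleteSpace X]
    [Nonempty X]
    (F : Ω → Set X) (hval : ∀ ω, (F ω).Nonempty ∧ IsClosed (F ω))
    (hclosed : ∀ C : Set X, IsClosed C → MeasurableSet {ω | (F ω ∩ C).Nonempty}) :
    ∃ c : ℕ → Ω → X, (∀ i, StronglyMeasurable (c i)) ∧ (∀ i ω, c i ω ∈ F ω) ∧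
      ∀ ω, F ω = closure (Set.range fun i => c i ω) := by
  classical
  -- hitting open balls through a closed set
  have hit_open : ∀ (C : Set X), IsClosed C → ∀ (y : X) (s : ℝ),
      MeasurableSet {ω | ((F ω ∩ C) ∩ ball y s).Nonempty} := by
    intro C hC y s
    have hset : {ω | ((F ω ∩ C) ∩ ball y s).Nonempty} =
        ⋃ q : ℚ, {ω | (q : ℝ) < s ∧ (F ω ∩ (C ∩ closedBall y q)).Nonempty} := by
      ext ω
      simp only [mem_setOf_eq, mem_iUnion]
      constructor
      · rintro ⟨z, ⟨⟨hzF, hzC⟩, hzb⟩⟩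
        obtain ⟨q, hq1, hq2⟩ := exists_rat_btwn (mem_ball.mp hzb)
        exact ⟨q, hq2, z, hzF, hzC, mem_closedBall.mpr hq1.le⟩
      · rintro ⟨q, hqs, z, hzF, hzC, hzb⟩
        exact ⟨z, ⟨hzF, hzC⟩, mem_ball.mpr (lt_of_le_of_lt (mem_closedBall.mp hzb) hqs)⟩
    rw [hset]
    refine MeasurableSet.iUnion fun q => ?_
    by_cases hq : (q : ℝ) < s
    · have : {ω | (q : ℝ) < s ∧ (F ω ∩ (C ∩ closedBall y q)).Nonempty} =
          {ω | (F ω ∩ (C ∩ closedBall y q)).Nonempty} := by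
        ext ω; simp [hq]
      rw [this]
      exact hclosed _ (hC.inter Metric.isClosed_closedBall)
    · have : {ω | (q : ℝ) < s ∧ (F ω ∩ (C ∩ closedBall y q)).Nonempty} = ∅ := by
        ext ω; simp [hq]
      rw [this]
      exact MeasurableSet.empty
  have hit_ball : ∀ (y : X) (s : ℝ), MeasurableSet {ω | (F ω ∩ ball y s).Nonempty} := by
    intro y s
    have := hit_open univ isClosed_univ y s
    simpa using this
  set x : ℕ → X := TopologicalSpace.denseSeq X with hxdef
  have hx : DenseRange x := TopologicalSpace.denseRange_denseSeq X
  set r : ℕ → ℝ := fun j => (2 : ℝ)⁻¹ ^ j with hrdef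
  have hrpos : ∀ j, 0 < r j := fun j => pow_pos (by norm_num) j
  -- the truncated multifunctions
  set G : ℕ × ℕ → Ω → Set X := fun nk ω =>
    if (F ω ∩ ball (x nk.1) (r nk.2)).Nonempty then F ω ∩ closedBall (x nk.1) (r nk.2)
    else F ω with hGdef
  have hGval : ∀ nk ω, (G nk ω).Nonempty ∧ IsClosed (G nk ω) := by
    intro nk ω
    by_cases h : (F ω ∩ ball (x nk.1) (r nk.2)).Nonempty
    · rw [hGdef]; simp only [if_pos h]
      exact ⟨h.mono (inter_subset_inter_right _ ball_subset_closedBall),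
        (hval ω).2.inter Metric.isClosed_closedBall⟩
    · rw [hGdef]; simp only [if_neg h]
      exact hval ω
  have hGsub : ∀ nk ω, G nk ω ⊆ F ω := by
    intro nk ω
    by_cases h : (F ω ∩ ball (x nk.1) (r nk.2)).Nonempty <;>
      simp only [hGdef, if_pos, if_neg, h, if_true, if_false]
    · exact inter_subset_left
    · exact subset_rfl
  have hGmeas : ∀ nk (y : X) (s : ℝ), MeasurableSet {ω | (G nk ω ∩ ball y s).Nonempty} := by
    intro nk y s
    have hA : MeasurableSet {ω | (F ω ∩ ball (x nk.1) (r nk.2)).Nonempty} := hit_ball _ _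
    have hset : {ω | (G nk ω ∩ ball y s).Nonempty} =
        ({ω | (F ω ∩ ball (x nk.1) (r nk.2)).Nonempty} ∩
          {ω | ((F ω ∩ closedBall (x nk.1) (r nk.2)) ∩ ball y s).Nonempty}) ∪
        ({ω | (F ω ∩ ball (x nk.1) (r nk.2)).Nonempty}ᶜ ∩
          {ω | ((F ω ∩ univ) ∩ ball y s).Nonempty}) := by
      ext ω
      by_cases h : (F ω ∩ ball (x nk.1) (r nk.2)).Nonempty <;>
        simp [hGdef, h, mem_setOf_eq]
    rw [hset]
    exact (hA.inter (hit_open _ Metric.isClosed_closedBall _ _)).union (hA.compl.inter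
      (hit_open _ isClosed_univ _ _))
  -- selections of each G nk
  choose c' hc'meas hc'mem using fun nk =>
    selection_aux (G nk) (hGval nk) (hGmeas nk)
  set e : ℕ → ℕ × ℕ := fun i => (Denumerable.eqv (ℕ × ℕ)).symm i with hedef
  have he : Function.Surjective e := (Denumerable.eqv (ℕ × ℕ)).symm.surjective
  refine ⟨fun i => c' (e i), fun i => hc'meas (e i), fun i ω => hGsub _ _ (hc'mem (e i) ω), ?_⟩
  intro ω
  have hrange : (Set.range fun i => c' (e i) ω) = Set.range fun nk => c' nk ω := by
    rw [show (fun i => c' (e i) ω) = (fun nk => c' nk ω) ∘ e from rfl, Set.range_comp,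
      he.range_eq, Set.image_univ]
  rw [hrange]
  apply Subset.antisymm
  · -- F ω ⊆ closure of range
    intro y hy
    rw [Metric.mem_closure_iff]
    intro ε hε
    obtain ⟨k, hk⟩ := exists_pow_lt_of_lt_one (half_pos hε) (show (2:ℝ)⁻¹ < 1 by norm_num)
    obtain ⟨n, hn⟩ := hx.exists_dist_lt y (hrpos k)
    have hhit : (F ω ∩ ball (x n) (r k)).Nonempty := ⟨y, hy, mem_ball.mpr hn⟩
    have hGeq : G (n, k) ω = F ω ∩ closedBall (x n) (r k) := by
      rw [hGdef]; simp only [if_pos hhit]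
    have hc := hc'mem (n, k) ω
    rw [hGeq] at hc
    refine ⟨c' (n, k) ω, ⟨(n, k), rfl⟩, ?_⟩
    calc dist y (c' (n, k) ω) ≤ dist y (x n) + dist (x n) (c' (n, k) ω) := dist_triangle _ _ _
      _ ≤ r k + r k := by
          refine add_le_add hn.le ?_
          rw [dist_comm]
          exact mem_closedBall.mp hc.2
      _ < ε / 2 + ε / 2 := add_lt_add hk hk
      _ = ε := by ring
  · refine closure_minimal ?_ (hval ω).2
    rintro z ⟨nk, rfl⟩
    exact hGsub nk ω (hc'mem nk ω)

end AuxSelection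

/-- Castaing representation + Hiai–Umegaki: there is a countable family
`{fᵢ} ⊆ S^p_F` with `F(ω) = cl{fᵢ(ω)}` for all `ω`, and `S^p_F` equals the closed
decomposable hull of `{fᵢ}`. -/
theorem stmt_2 {Ω X : Type*} {m : MeasurableSpace Ω} (μ : @MeasureTheory.Measure Ω m)
    [IsProbabilityMeasure μ]
    [NormedAddCommGroup X] [NormedSpace ℝ X] [CompleteSpace X]
    [TopologicalSpace.SeparableSpace X] [MeasurableSpace X] [BorelSpace X]
    (p : ℝ≥0∞) [Fact (1 ≤ p)] (hp : p ≠ ∞)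
    (F : Ω → Set X) (hF : IsSVRV m F) (hne : (sel m μ p F).Nonempty) :
    ∃ f : ℕ → Ω → X,
      (∀ i, StronglyMeasurable (f i)) ∧
      (∀ i, MemLp (f i) p μ) ∧
      (∀ i, ∀ᵐ ω ∂μ, f i ω ∈ F ω) ∧
      (∀ ω, F ω = closure (Set.range fun i => f i ω)) ∧
      sel m μ p F = decClosure m μ p {g : Lp X p μ | ∃ i, ⇑g =ᵐ[μ] f i} := by
  classical
  have hp1 : (1 : ℝ≥0∞) ≤ p := Fact.out
  haveI : Nonempty Ω := by
    by_contra h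
    rw [not_nonempty_iff] at h
    have h1 : μ Set.univ = 1 := measure_univ
    rw [Set.univ_eq_empty_iff.mpr h, measure_empty] at h1
    exact zero_ne_one h1
  haveI : Nonempty X := ⟨((hF.1 (Classical.arbitrary Ω)).1).some⟩
  obtain ⟨c, hcm, hcmem, hcdense⟩ := castaing_aux F hF.1 hF.2
  obtain ⟨f₀, hf₀m', hf₀mem⟩ := hne
  set ψ : Ω → X := (Lp.aestronglyMeasurable f₀).mk ⇑f₀ with hψdef
  have hψsm : StronglyMeasurable ψ := (Lp.aestronglyMeasurable f₀).stronglyMeasurable_mk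
  have hψeq : ⇑f₀ =ᵐ[μ] ψ := (Lp.aestronglyMeasurable f₀).ae_eq_mk
  have hψF : ∀ᵐ ω ∂μ, ψ ω ∈ F ω := by
    filter_upwards [hψeq, hf₀mem] with ω h1 h2
    rwa [← h1]
  obtain ⟨N0, hTN, hN0meas, hN0null⟩ :=
    exists_measurable_superset_of_null (ae_iff.mp hψF)
  set φ : Ω → X := N0.piecewise (c 0) ψ with hφdef
  have hφsm : StronglyMeasurable φ := (hcm 0).piecewise hN0meas hψsm
  have hφae : φ =ᵐ[μ] ⇑f₀ := by
    have hN' : ∀ᵐ ω ∂μ, ω ∉ N0 := by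
      rw [ae_iff]
      simpa using hN0null
    filter_upwards [hψeq, hN'] with ω h1 h2
    rw [hφdef, Set.piecewise_eq_of_notMem _ _ _ h2, ← h1]
  have hφmem : ∀ ω, φ ω ∈ F ω := by
    intro ω
    by_cases h : ω ∈ N0
    · rw [hφdef, Set.piecewise_eq_of_mem _ _ _ h]; exact hcmem 0 ω
    · rw [hφdef, Set.piecewise_eq_of_notMem _ _ _ h]
      by_contra hc
      exact h (hTN hc)
  have hφLp : MemLp φ p μ := (Lp.memLp f₀).ae_eq hφae.symm
  -- the countable family
  set e : ℕ → ℕ × ℕ := fun i => (Denumerable.eqv (ℕ × ℕ)).symm i with hedef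
  have he : Function.Surjective e := (Denumerable.eqv (ℕ × ℕ)).symm.surjective
  set B : ℕ × ℕ → Set Ω := fun nk => {ω | ‖c nk.1 ω‖ ≤ (nk.2 : ℝ)} with hBdef
  have hBmeas : ∀ nk, MeasurableSet (B nk) := fun nk =>
    measurableSet_le (hcm nk.1).measurable.norm measurable_const
  set f : ℕ → Ω → X := fun i => (B (e i)).piecewise (c (e i).1) φ with hfdef
  have hfsm : ∀ i, StronglyMeasurable (f i) := fun i =>
    (hcm (e i).1).piecewise (hBmeas (e i)) hφsm
  have hfmem : ∀ i ω, f i ω ∈ F ω := by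
    intro i ω
    by_cases h : ω ∈ B (e i)
    · rw [hfdef]; simp only [Set.piecewise_eq_of_mem _ _ _ h]; exact hcmem _ ω
    · rw [hfdef]; simp only [Set.piecewise_eq_of_notMem _ _ _ h]; exact hφmem ω
  have hfLp : ∀ i, MemLp (f i) p μ := by
    intro i
    have hsplit : f i = fun ω => (B (e i)).indicator (c (e i).1) ω +
        (B (e i))ᶜ.indicator φ ω := by
      funext ω
      by_cases h : ω ∈ B (e i) <;>
        simp [hfdef, Set.piecewise, Set.indicator, h]
    rw [hsplit]
    refine MemLp.add ?_ (hφLp.indicator (hBmeas (e i)).compl)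
    refine MemLp.of_bound (((hcm (e i).1).indicator (hBmeas (e i))).aestronglyMeasurable)
      ((e i).2 : ℝ) (Eventually.of_forall fun ω => ?_)
    by_cases h : ω ∈ B (e i)
    · rw [Set.indicator_of_mem h]; exact h
    · rw [Set.indicator_of_notMem h]; simp
  have hfdense : ∀ ω, F ω = closure (Set.range fun i => f i ω) := by
    intro ω
    apply Subset.antisymm
    · rw [hcdense ω]
      apply closure_mono
      rintro z ⟨n, rfl⟩
      obtain ⟨i, hi⟩ := he (n, ⌈‖c n ω‖⌉₊)
      refine ⟨i, ?_⟩
      have hωB : ω ∈ B (n, ⌈‖c n ω‖⌉₊) := by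
        show ‖c n ω‖ ≤ _
        exact Nat.le_ceil _
      show (B (e i)).piecewise (c (e i).1) φ ω = c n ω
      rw [hi]
      exact Set.piecewise_eq_of_mem _ _ _ hωB
    · refine closure_minimal ?_ (hF.1 ω).2
      rintro z ⟨i, rfl⟩
      exact hfmem i ω
  refine ⟨f, hfsm, hfLp, fun i => Eventually.of_forall (hfmem i), hfdense, ?_⟩
  -- Part 5
  set M : Set (Lp X p μ) := {g : Lp X p μ | ∃ i, ⇑g =ᵐ[μ] f i} with hMdef
  set Fc : ℕ → Lp X p μ := fun i => (hfLp i).toLp (f i) with hFcdef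
  have hFc : ∀ i, ⇑(Fc i) =ᵐ[μ] f i := fun i => (hfLp i).coeFn_toLp
  have hFcM : ∀ i, Fc i ∈ M := fun i => ⟨i, hFc i⟩
  have hMsel : M ⊆ sel m μ p F := by
    rintro g ⟨i, hgi⟩
    refine ⟨⟨f i, hfsm i, hgi⟩, ?_⟩
    filter_upwards [hgi] with ω h1
    rw [h1]; exact hfmem i ω
  have hselClosed : IsClosed (sel m μ p F) := by
    apply IsSeqClosed.isClosed
    intro gs g hgs hlim
    refine ⟨⟨(Lp.aestronglyMeasurable g).mk _, (Lp.aestronglyMeasurable g).stronglyMeasurable_mk,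
      (Lp.aestronglyMeasurable g).ae_eq_mk⟩, ?_⟩
    obtain ⟨ns, _, hns⟩ := (tendstoInMeasure_of_tendsto_Lp hlim).exists_seq_tendsto_ae
    have hmem : ∀ᵐ ω ∂μ, ∀ n, gs n ω ∈ F ω := ae_all_iff.mpr fun n => (hgs n).2
    filter_upwards [hns, hmem] with ω h1 h2
    exact (hF.1 ω).2.mem_of_tendsto h1 (Eventually.of_forall fun n => h2 (ns n))
  have hselDec : Decomp m μ p (sel m μ p F) := by
    intro f₁ h₁ f₂ h₂ A hA
    have hw : MemLp (A.piecewise ⇑f₁ ⇑f₂) p μ := by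
      have hsp : A.piecewise ⇑f₁ ⇑f₂ = fun ω => A.indicator ⇑f₁ ω + Aᶜ.indicator ⇑f₂ ω := by
        funext ω; by_cases h : ω ∈ A <;> simp [Set.piecewise, Set.indicator, h]
      rw [hsp]
      exact ((Lp.memLp f₁).indicator hA).add ((Lp.memLp f₂).indicator hA.compl)
    refine ⟨hw.toLp _, ⟨⟨(Lp.aestronglyMeasurable (hw.toLp _)).mk _,
      (Lp.aestronglyMeasurable _).stronglyMeasurable_mk,
      (Lp.aestronglyMeasurable _).ae_eq_mk⟩, ?_⟩, ?_⟩
    · filter_upwards [hw.coeFn_toLp, h₁.2, h₂.2] with ω h0 hm1 hm2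
      rw [h0]
      by_cases h : ω ∈ A
      · rw [Set.piecewise_eq_of_mem _ _ _ h]; exact hm1
      · rw [Set.piecewise_eq_of_notMem _ _ _ h]; exact hm2
    · filter_upwards [hw.coeFn_toLp] with ω h0
      constructor
      · intro h; rw [h0, Set.piecewise_eq_of_mem _ _ _ h]
      · intro h; rw [h0, Set.piecewise_eq_of_notMem _ _ _ h]
  apply Subset.antisymm
  · -- sel ⊆ decClosure
    intro g hg
    rw [decClosure, mem_sInter]
    rintro N ⟨hMN, hNcl, hNdec⟩
    rw [← hNcl.closure_eq, Metric.mem_closure_iff]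
    intro δ hδ
    set gsm : Ω → X := (Lp.aestronglyMeasurable g).mk ⇑g with hgsmdef
    have hgsm : StronglyMeasurable gsm := (Lp.aestronglyMeasurable g).stronglyMeasurable_mk
    have hgeq : ⇑g =ᵐ[μ] gsm := (Lp.aestronglyMeasurable g).ae_eq_mk
    set A : ℕ → Set Ω := fun i => {ω | dist (gsm ω) (f i ω) < δ / 4} with hAdef
    have hAmeas : ∀ i, MeasurableSet (A i) :=
      fun i => measurableSet_lt (hgsm.dist (hfsm i)).measurable measurable_const
    have hcover : ∀ᵐ ω ∂μ, ∃ i, ω ∈ A i := by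
      filter_upwards [hgeq, hg.2] with ω h1 h2
      rw [hfdense ω, Metric.mem_closure_iff] at h2
      obtain ⟨z, ⟨i, rfl⟩, hz⟩ := h2 (δ / 4) (by linarith)
      refine ⟨i, ?_⟩
      show dist (gsm ω) (f i ω) < δ / 4
      rwa [← h1]
    set D : ℕ → Set Ω := fun i => A i \ ⋃ (j : ℕ) (_ : j < i), A j with hDdef
    have hDmeas : ∀ i, MeasurableSet (D i) := fun i =>
      (hAmeas i).diff (MeasurableSet.iUnion fun j => MeasurableSet.iUnion fun _ => hAmeas j)
    have hDsub : ∀ i, D i ⊆ A i := fun i => diff_subset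
    have hDdisj : ∀ i j, i < j → ∀ ω, ω ∈ D i → ω ∉ D j := by
      intro i j hij ω hωi hωj
      exact hωj.2 (mem_iUnion.mpr ⟨i, mem_iUnion.mpr ⟨hij, hωi.1⟩⟩)
    have key : ∀ k : ℕ, ∃ v ∈ N, ∀ᵐ ω ∂μ,
        (∀ i, i < k → ω ∈ D i → v ω = f i ω) ∧
        ((∀ i, i < k → ω ∉ D i) → v ω = f 0 ω) := by
      intro k
      induction k with
      | zero =>
        refine ⟨Fc 0, hMN (hFcM 0), ?_⟩
        filter_upwards [hFc 0] with ω h0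
        exact ⟨fun i hi => absurd hi (Nat.not_lt_zero i), fun _ => h0⟩
      | succ k ih =>
        obtain ⟨v, hvN, hvae⟩ := ih
        obtain ⟨w, hwN, hwae⟩ := hNdec (Fc k) (hMN (hFcM k)) v hvN (D k) (hDmeas k)
        refine ⟨w, hwN, ?_⟩
        filter_upwards [hvae, hwae, hFc k] with ω h1 h2 h3
        constructor
        · intro i hik hDi
          rcases Nat.lt_succ_iff_lt_or_eq.mp hik with hik' | rfl
          · rw [h2.2 (hDdisj i k hik' ω hDi)]
            exact h1.1 i hik' hDi
          · rw [h2.1 hDi]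
            exact h3
        · intro hout
          rw [h2.2 (hout k (Nat.lt_succ_self k))]
          exact h1.2 fun i hik => hout i (hik.trans (Nat.lt_succ_self k))
    have hq : MemLp (fun ω => f 0 ω - gsm ω) p μ :=
      (hfLp 0).sub ((Lp.memLp g).ae_eq hgeq)
    obtain ⟨η, hηpos, hη⟩ := hq.eLpNorm_indicator_le hp1 hp (show (0:ℝ) < δ / 4 by linarith)
    set S : ℕ → Set Ω := fun k => (⋃ (i : ℕ) (_ : i < k), A i)ᶜ with hSdef
    have hSmeas : ∀ k, MeasurableSet (S k) := fun k =>
      (MeasurableSet.iUnion fun j => MeasurableSet.iUnion fun _ => hAmeas j).compl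
    have hSanti : Antitone S := by
      intro k l hkl ω hω
      simp only [hSdef, mem_compl_iff] at hω ⊢
      intro hmem
      obtain ⟨i, hik, hi⟩ := mem_iUnion₂.mp hmem
      exact hω (mem_iUnion₂.mpr ⟨i, lt_of_lt_of_le hik hkl, hi⟩)
    have hSint : ⋂ k, S k = (⋃ i, A i)ᶜ := by
      ext ω
      simp only [mem_iInter, mem_compl_iff]
      constructor
      · intro h hmem
        obtain ⟨i, hi⟩ := mem_iUnion.mp hmem
        exact h (i + 1) (mem_iUnion₂.mpr ⟨i, Nat.lt_succ_self i, hi⟩)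
      · intro h k hmem
        obtain ⟨i, _, hi⟩ := mem_iUnion₂.mp hmem
        exact h (mem_iUnion.mpr ⟨i, hi⟩)
    have hSnull : μ ((⋃ i, A i)ᶜ) = 0 := by
      have h1 := ae_iff.mp hcover
      have h2 : (⋃ i, A i)ᶜ = {ω | ¬∃ i, ω ∈ A i} := by
        ext ω; simp
      rw [h2]; exact h1
    have htend := tendsto_measure_iInter_atTop (μ := μ)
      (fun k => (hSmeas k).nullMeasurableSet) hSanti ⟨0, measure_ne_top μ _⟩
    rw [hSint, hSnull] at htend
    obtain ⟨k, hk⟩ := (htend.eventually_lt_const (ENNReal.ofReal_pos.mpr hηpos)).exists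
    obtain ⟨v, hvN, hvae⟩ := key k
    refine ⟨v, hvN, ?_⟩
    have asm1 : AEStronglyMeasurable ((S k)ᶜ.indicator fun ω => v ω - g ω) μ :=
      ((Lp.aestronglyMeasurable v).sub (Lp.aestronglyMeasurable g)).indicator (hSmeas k).compl
    have asm2 : AEStronglyMeasurable ((S k).indicator fun ω => v ω - g ω) μ :=
      ((Lp.aestronglyMeasurable v).sub (Lp.aestronglyMeasurable g)).indicator (hSmeas k)
    have hbound1 : eLpNorm ((S k)ᶜ.indicator fun ω => v ω - g ω) p μ ≤
        ENNReal.ofReal (δ / 4) := by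
      have hae : ∀ᵐ ω ∂μ, ‖(S k)ᶜ.indicator (fun ω => v ω - g ω) ω‖ ≤ δ / 4 := by
        filter_upwards [hvae, hgeq] with ω h1 h2
        by_cases h : ω ∈ (S k)ᶜ
        · rw [Set.indicator_of_mem h]
          have h' : ω ∈ ⋃ (i : ℕ) (_ : i < k), A i := by
            simpa [hSdef] using h
          obtain ⟨i, hik, hAi⟩ := mem_iUnion₂.mp h'
          have hex : ∃ i, ω ∈ A i := ⟨i, hAi⟩
          have hi₀A : ω ∈ A (Nat.find hex) := Nat.find_spec hex
          have hi₀k : Nat.find hex < k := lt_of_le_of_lt (Nat.find_min' hex hAi) hik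
          have hi₀D : ω ∈ D (Nat.find hex) := by
            refine ⟨hi₀A, fun hmem => ?_⟩
            obtain ⟨j, hj, hAj⟩ := mem_iUnion₂.mp hmem
            exact Nat.find_min hex hj hAj
          rw [h1.1 _ hi₀k hi₀D, ← dist_eq_norm, dist_comm, h2]
          exact (hi₀A).le
        · rw [Set.indicator_of_notMem h]
          simp only [norm_zero]
          linarith
      calc eLpNorm ((S k)ᶜ.indicator fun ω => v ω - g ω) p μ
          ≤ μ Set.univ ^ p.toReal⁻¹ * ENNReal.ofReal (δ / 4) := eLpNorm_le_of_ae_bound hae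
        _ = ENNReal.ofReal (δ / 4) := by
            rw [measure_univ, ENNReal.one_rpow, one_mul]
    have hbound2 : eLpNorm ((S k).indicator fun ω => v ω - g ω) p μ ≤
        ENNReal.ofReal (δ / 4) := by
      have hcongr : (S k).indicator (fun ω => v ω - g ω) =ᵐ[μ]
          (S k).indicator fun ω => f 0 ω - gsm ω := by
        filter_upwards [hvae, hgeq] with ω h1 h2
        by_cases h : ω ∈ S k
        · rw [Set.indicator_of_mem h, Set.indicator_of_mem h]
          have hout : ∀ i, i < k → ω ∉ D i := by
            intro i hik hDi
            exact h (mem_iUnion₂.mpr ⟨i, hik, hDsub i hDi⟩)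
          rw [h1.2 hout, h2]
        · rw [Set.indicator_of_notMem h, Set.indicator_of_notMem h]
      rw [eLpNorm_congr_ae hcongr]
      exact hη (S k) (hSmeas k) hk.le
    have htotal : eLpNorm (fun ω => v ω - g ω) p μ ≤ ENNReal.ofReal (δ / 2) := by
      have hsp : (fun ω => v ω - g ω) = ((S k)ᶜ.indicator fun ω => v ω - g ω) +
          ((S k).indicator fun ω => v ω - g ω) := by
        funext ω
        by_cases h : ω ∈ S k <;>
          simp [Set.indicator, h]
      rw [hsp]
      calc eLpNorm (((S k)ᶜ.indicator fun ω => v ω - g ω) +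
            ((S k).indicator fun ω => v ω - g ω)) p μ
          ≤ eLpNorm ((S k)ᶜ.indicator fun ω => v ω - g ω) p μ +
            eLpNorm ((S k).indicator fun ω => v ω - g ω) p μ :=
            eLpNorm_add_le asm1 asm2 hp1
        _ ≤ ENNReal.ofReal (δ / 4) + ENNReal.ofReal (δ / 4) := add_le_add hbound1 hbound2
        _ = ENNReal.ofReal (δ / 2) := by
            rw [← ENNReal.ofReal_add (by linarith) (by linarith)]
            congr 1
            ring
    have hdist : dist g v = (eLpNorm (fun ω => v ω - g ω) p μ).toReal := by
      rw [Lp.dist_def]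
      congr 1
      rw [show (⇑g - ⇑v) = -(fun ω => v ω - g ω) by funext ω; simp, eLpNorm_neg]
    calc dist g v = (eLpNorm (fun ω => v ω - g ω) p μ).toReal := hdist
      _ ≤ (ENNReal.ofReal (δ / 2)).toReal := ENNReal.toReal_mono ENNReal.ofReal_ne_top htotal
      _ = δ / 2 := ENNReal.toReal_ofReal (by linarith)
      _ < δ := by linarith
  · exact sInter_subset_of_mem ⟨hMsel, hselClosed, hselDec⟩
end
end

section
/- Let F = (F_t)_{t≥0} be a set-valued 𝔽-martingale with convex integrably bounded values in a separable reflexive Banach space X such that F_0 = {0} a.s. Then F_t is a.s. a singleton for every t ≥ 0; i.e., every set-valued martingale starting at {0} degenerates to a vector-valued martingale. -/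
open MeasureTheory Set Filter Topology Bornology
open scoped ENNReal NNReal Pointwise

noncomputable section

/-! ### Auxiliary: Kuratowski–Ryll-Nardzewski measurable selection and
Castaing representation -/

section KRNaux

variable {Ω X : Type*} [MetricSpace X] [TopologicalSpace.SeparableSpace X]
  {𝒜 : MeasurableSpace Ω}

/-- hitting open sets is measurable, given that hitting closed sets is. -/
lemma krn_hit_open {F : Ω → Set X}
    (hF : ∀ C : Set X, IsClosed C → MeasurableSet[𝒜] {ω | (F ω ∩ C).Nonempty})
    {U : Set X} (hU : IsOpen U) :
    MeasurableSet[𝒜] {ω | (F ω ∩ U).Nonempty} := by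
  rcases isEmpty_or_nonempty X with hX | hX
  · have : {ω | (F ω ∩ U).Nonempty} = ∅ := by
      ext ω; simp only [Set.mem_setOf_eq, Set.mem_empty_iff_false, iff_false]
      rintro ⟨x, -⟩; exact (IsEmpty.false x)
    rw [this]; exact MeasurableSet.empty
  · set e := TopologicalSpace.denseSeq X with he
    have hd : DenseRange e := TopologicalSpace.denseRange_denseSeq X
    have key : ∀ ω, (F ω ∩ U).Nonempty ↔
        ∃ n : ℕ, ∃ q : ℚ, (0 < (q : ℝ) ∧ Metric.closedBall (e n) q ⊆ U) ∧
          (F ω ∩ Metric.closedBall (e n) q).Nonempty := by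
      intro ω
      constructor
      · rintro ⟨x, hxF, hxU⟩
        obtain ⟨ε, hε, hball⟩ := Metric.isOpen_iff.mp hU x hxU
        obtain ⟨n, hn⟩ := Metric.denseRange_iff.mp hd x (ε / 4) (by linarith)
        obtain ⟨q, hq1, hq2⟩ := exists_rat_btwn (show ε / 4 < ε / 2 by linarith)
        refine ⟨n, q, ⟨by linarith, ?_⟩, ⟨x, hxF, ?_⟩⟩
        · intro y hy
          apply hball
          have : dist y x ≤ dist y (e n) + dist (e n) x := dist_triangle _ _ _
          have h2 : dist (e n) x = dist x (e n) := dist_comm _ _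
          simp only [Metric.mem_closedBall] at hy
          simp only [Metric.mem_ball]
          linarith
        · simp only [Metric.mem_closedBall, dist_comm]
          linarith
      · rintro ⟨n, q, ⟨-, hsub⟩, x, hxF, hxB⟩
        exact ⟨x, hxF, hsub hxB⟩
    have : {ω | (F ω ∩ U).Nonempty} = ⋃ n : ℕ, ⋃ q : ℚ,
        {ω | (0 < (q : ℝ) ∧ Metric.closedBall (e n) q ⊆ U) ∧
          (F ω ∩ Metric.closedBall (e n) q).Nonempty} := by
      ext ω; simp only [Set.mem_setOf_eq, Set.mem_iUnion, key ω]
    rw [this]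
    refine MeasurableSet.iUnion fun n => MeasurableSet.iUnion fun q => ?_
    by_cases h : 0 < (q : ℝ) ∧ Metric.closedBall (e n) q ⊆ U
    · have : {ω | (0 < (q : ℝ) ∧ Metric.closedBall (e n) q ⊆ U) ∧
          (F ω ∩ Metric.closedBall (e n) q).Nonempty}
          = {ω | (F ω ∩ Metric.closedBall (e n) q).Nonempty} := by
        ext ω; simp [h]
      rw [this]; exact hF _ Metric.isClosed_closedBall
    · have : {ω | (0 < (q : ℝ) ∧ Metric.closedBall (e n) q ⊆ U) ∧
          (F ω ∩ Metric.closedBall (e n) q).Nonempty} = ∅ := by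
        ext ω
        constructor
        · rintro ⟨hcond, -⟩; exact (h hcond).elim
        · rintro ⟨⟩
      rw [this]; exact MeasurableSet.empty

/-- measurability of a (partial) `Nat.find`. -/
lemma krn_meas_find {Q : Ω → ℕ → Prop} [∀ ω, DecidablePred (Q ω)] [∀ ω, Decidable (∃ n, Q ω n)]
    (hQ : ∀ n, MeasurableSet[𝒜] {ω | Q ω n}) :
    Measurable[𝒜] (fun ω => if h : ∃ n, Q ω n then Nat.find h else 0) := by
  classical
  have hp : ∀ ω, ∃ n, Q ω n ∨ (¬ ∃ j, Q ω j) ∧ n = 0 := by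
    intro ω
    by_cases h : ∃ n, Q ω n
    · exact ⟨h.choose, Or.inl h.choose_spec⟩
    · exact ⟨0, Or.inr ⟨h, rfl⟩⟩
  have heq : (fun ω => if h : ∃ n, Q ω n then Nat.find h else 0)
      = fun ω => Nat.find (hp ω) := by
    funext ω
    by_cases h : ∃ n, Q ω n
    · rw [dif_pos h]
      refine ((Nat.find_eq_iff (hp ω)).mpr ⟨Or.inl (Nat.find_spec h), fun j hj => ?_⟩).symm
      rintro (hQj | ⟨hne, rfl⟩)
      · exact Nat.find_min h hj hQj
      · exact hne h
    · rw [dif_neg h]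
      refine ((Nat.find_eq_iff (hp ω)).mpr ⟨Or.inr ⟨h, rfl⟩, fun j hj => ?_⟩).symm
      omega
  rw [heq]
  refine measurable_find _ fun n => ?_
  by_cases hn : n = 0
  · subst hn
    have : {ω | Q ω 0 ∨ (¬ ∃ j, Q ω j) ∧ 0 = 0} = {ω | Q ω 0} ∪ ⋂ j, {ω | Q ω j}ᶜ := by
      ext ω; simp [not_exists]
    rw [this]
    exact (hQ 0).union (MeasurableSet.iInter fun j => (hQ j).compl)
  · have : {ω | Q ω n ∨ (¬ ∃ j, Q ω j) ∧ n = 0} = {ω | Q ω n} := by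
      ext ω; simp [hn]
    rw [this]; exact hQ n

/-- composition over a countable intermediate value. -/
lemma krn_meas_comp {g : Ω → ℕ} (hg : Measurable[𝒜] g) {h : ℕ → Ω → ℕ}
    (hh : ∀ m, Measurable[𝒜] (h m)) : Measurable[𝒜] fun ω => h (g ω) ω := by
  refine measurable_to_countable' fun n => ?_
  have : (fun ω => h (g ω) ω) ⁻¹' {n} = ⋃ m, g ⁻¹' {m} ∩ (h m) ⁻¹' {n} := by
    ext ω
    simp only [Set.mem_preimage, Set.mem_singleton_iff, Set.mem_iUnion, Set.mem_inter_iff]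
    constructor
    · intro hn; exact ⟨g ω, rfl, hn⟩
    · rintro ⟨m, rfl, hn⟩; exact hn
  rw [this]
  exact MeasurableSet.iUnion fun m => ((hg (measurableSet_singleton m)).inter
    (hh m (measurableSet_singleton n)))

end KRNaux


section KRNsel
variable {Ω X : Type*} [MetricSpace X] [TopologicalSpace.SeparableSpace X]
  [CompleteSpace X] [MeasurableSpace X] [BorelSpace X] {𝒜 : MeasurableSpace Ω}

/-- Kuratowski–Ryll-Nardzewski measurable selection. -/
theorem krn_selection {F : Ω → Set X}
    (hne : ∀ ω, (F ω).Nonempty) (hcl : ∀ ω, IsClosed (F ω))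
    (hF : ∀ C : Set X, IsClosed C → MeasurableSet[𝒜] {ω | (F ω ∩ C).Nonempty}) :
    ∃ f : Ω → X, StronglyMeasurable[𝒜] f ∧ ∀ ω, f ω ∈ F ω := by
  classical
  rcases isEmpty_or_nonempty Ω with hΩ | hΩ
  · exact ⟨fun ω => (hne ω).some, StronglyMeasurable.of_subsingleton_dom,
      fun ω => (hne ω).some_mem⟩
  haveI : Nonempty X := ⟨(hne (Classical.arbitrary Ω)).some⟩
  haveI : SecondCountableTopology X := UniformSpace.secondCountable_of_separable X
  set e := TopologicalSpace.denseSeq X with he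
  have hd : DenseRange e := TopologicalSpace.denseRange_denseSeq X
  set p : ℕ → ℝ := fun k => (2 : ℝ)⁻¹ ^ k with hp
  have hppos : ∀ k, 0 < p k := fun k => pow_pos (by norm_num) k
  -- the step predicate
  set Q : ℕ → ℕ → Ω → ℕ → Prop := fun k prev ω n =>
    (F ω ∩ (Metric.ball (e n) (p (k + 1)) ∩ Metric.ball (e prev) (p k))).Nonempty with hQ
  -- the recursively defined index sequence
  set N : ℕ → Ω → ℕ := fun k => Nat.rec
    (fun ω => if h : ∃ n, (F ω ∩ Metric.ball (e n) (p 0)).Nonempty then Nat.find h else 0)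
    (fun k Nk ω => if h : ∃ n, Q k (Nk ω) ω n then Nat.find h else 0) k with hN
  -- invariant
  have hinv : ∀ k ω, (F ω ∩ Metric.ball (e (N k ω)) (p k)).Nonempty := by
    intro k
    induction k with
    | zero =>
      intro ω
      obtain ⟨x, hx⟩ := hne ω
      obtain ⟨n, hn⟩ := Metric.denseRange_iff.mp hd x (p 0) (hppos 0)
      have hex : ∃ n, (F ω ∩ Metric.ball (e n) (p 0)).Nonempty :=
        ⟨n, x, hx, by simpa [dist_comm] using hn⟩
      have : N 0 ω = Nat.find hex := dif_pos hex
      rw [this]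
      exact Nat.find_spec hex
    | succ k ih =>
      intro ω
      obtain ⟨y, hyF, hyB⟩ := ih ω
      obtain ⟨n, hn⟩ := Metric.denseRange_iff.mp hd y (p (k + 1)) (hppos (k + 1))
      have hex : ∃ n, Q k (N k ω) ω n :=
        ⟨n, y, hyF, ⟨by simpa [dist_comm] using hn, hyB⟩⟩
      have hNs : N (k + 1) ω = Nat.find hex := dif_pos hex
      obtain ⟨z, hzF, hz1, hz2⟩ := Nat.find_spec hex
      exact ⟨z, hzF, by rwa [hNs]⟩
  -- Cauchy and limit
  set u : ℕ → Ω → X := fun k ω => e (N k ω) with hu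
  have hcau : ∀ ω, CauchySeq fun k => u k ω := by
    intro ω
    apply cauchySeq_of_le_geometric (r := (2 : ℝ)⁻¹) (C := 3) (by norm_num)
    intro k
    obtain ⟨y, hyF, hyB⟩ := hinv (k + 1) ω
    -- y ∈ ball (e (N (k+1) ω)) (p (k+1)), and also need y close to e (N k ω)
    -- from the find spec of the step
    obtain ⟨z, hzF, hz1, hz2⟩ : (F ω ∩ (Metric.ball (e (N (k + 1) ω)) (p (k + 1)) ∩
        Metric.ball (e (N k ω)) (p k))).Nonempty := by
      obtain ⟨y', hyF', hyB'⟩ := hinv k ω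
      obtain ⟨n, hn⟩ := Metric.denseRange_iff.mp hd y' (p (k + 1)) (hppos (k + 1))
      have hex : ∃ n, Q k (N k ω) ω n := ⟨n, y', hyF', ⟨by simpa [dist_comm] using hn, hyB'⟩⟩
      have hNs : N (k + 1) ω = Nat.find hex := dif_pos hex
      rw [hNs]
      exact Nat.find_spec hex
    have : dist (u k ω) (u (k + 1) ω) ≤ p (k + 1) + p k := by
      calc dist (u k ω) (u (k + 1) ω) ≤ dist (u k ω) z + dist z (u (k + 1) ω) :=
            dist_triangle _ _ _
        _ ≤ p k + p (k + 1) := by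
            have h1 : dist z (e (N k ω)) < p k := by simpa [Metric.mem_ball] using hz2
            have h2 : dist z (e (N (k + 1) ω)) < p (k + 1) := by
              simpa [Metric.mem_ball] using hz1
            rw [dist_comm (u k ω) z]
            exact add_le_add h1.le h2.le
        _ = p (k + 1) + p k := by ring
    refine this.trans ?_
    have : p (k + 1) + p k ≤ 3 * (2 : ℝ)⁻¹ ^ k := by
      simp only [hp, pow_succ]
      nlinarith [pow_pos (show (0:ℝ) < 2⁻¹ by norm_num) k]
    simpa using this
  have hlim : ∀ ω, ∃ x, Tendsto (fun k => u k ω) atTop (𝓝 x) :=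
    fun ω => cauchySeq_tendsto_of_complete (hcau ω)
  choose f hf using hlim
  -- f ω ∈ F ω
  have hmem : ∀ ω, f ω ∈ F ω := by
    intro ω
    rw [← (hcl ω).closure_eq]
    rw [Metric.mem_closure_iff]
    intro ε hε
    obtain ⟨k, hk⟩ : ∃ k, p k < ε / 2 := by
      obtain ⟨k, hk⟩ := exists_pow_lt_of_lt_one (show (0:ℝ) < ε / 2 by linarith)
        (show (2:ℝ)⁻¹ < 1 by norm_num)
      exact ⟨k, hk⟩
    obtain ⟨k', hk', hdist⟩ : ∃ k' ≥ k, dist (u k' ω) (f ω) < ε / 2 := by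
      have := (hf ω).eventually (Metric.ball_mem_nhds (f ω) (show (0:ℝ) < ε / 2 by linarith))
      obtain ⟨k', hk', h⟩ := ((this.and (eventually_ge_atTop k)).exists)
      exact ⟨k', h, by simpa [Metric.mem_ball] using hk'⟩
    obtain ⟨y, hyF, hyB⟩ := hinv k' ω
    refine ⟨y, hyF, ?_⟩
    have h1 : dist y (u k' ω) < p k' := by simpa [Metric.mem_ball] using hyB
    have h2 : p k' ≤ p k := by
      apply pow_le_pow_of_le_one (by norm_num) (by norm_num) hk'
    calc dist (f ω) y ≤ dist (f ω) (u k' ω) + dist (u k' ω) y := dist_triangle _ _ _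
      _ < ε / 2 + p k := by
          rw [dist_comm (f ω) (u k' ω), dist_comm (u k' ω) y]
          exact add_lt_add_of_lt_of_le hdist (h1.le.trans h2)
      _ < ε := by linarith
  -- measurability
  have hNmeas : ∀ k, Measurable[𝒜] (N k) := by
    intro k
    induction k with
    | zero =>
      have : N 0 = fun ω => if h : ∃ n, (F ω ∩ Metric.ball (e n) (p 0)).Nonempty
          then Nat.find h else 0 := rfl
      rw [this]
      exact krn_meas_find fun n => krn_hit_open hF Metric.isOpen_ball
    | succ k ih =>
      have step : ∀ m, Measurable[𝒜] (fun ω' => if h : ∃ n, Q k m ω' n then Nat.find h else 0) :=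
        fun m => krn_meas_find fun n =>
          krn_hit_open hF (Metric.isOpen_ball.inter Metric.isOpen_ball)
      exact krn_meas_comp (h := fun m ω' => if h : ∃ n, Q k m ω' n then Nat.find h else 0)
        ih step
  have humeas : ∀ k, StronglyMeasurable[𝒜] (u k) := by
    intro k
    have : Measurable[𝒜] (u k) := (measurable_from_top).comp (hNmeas k)
    exact this.stronglyMeasurable
  have hfsm : StronglyMeasurable[𝒜] f := by
    refine stronglyMeasurable_of_tendsto atTop humeas ?_
    rw [tendsto_pi_nhds]
    exact hf
  exact ⟨f, hfsm, hmem⟩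


/-- Castaing-type representation: a countable family of measurable selections reaching
every point of `F ω`. -/
theorem krn_castaing {F : Ω → Set X}
    (hne : ∀ ω, (F ω).Nonempty) (hcl : ∀ ω, IsClosed (F ω))
    (hF : ∀ C : Set X, IsClosed C → MeasurableSet[𝒜] {ω | (F ω ∩ C).Nonempty}) :
    ∃ f : ℕ × ℕ → Ω → X, (∀ i, StronglyMeasurable[𝒜] (f i) ∧ ∀ ω, f i ω ∈ F ω) ∧
      ∀ ω, ∀ x ∈ F ω, ∀ ε > 0, ∃ i, dist (f i ω) x < ε := by
  classical
  rcases isEmpty_or_nonempty Ω with hΩ | hΩ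
  · exact ⟨fun _ ω => (hne ω).some,
      fun i => ⟨StronglyMeasurable.of_subsingleton_dom, fun ω => (hne ω).some_mem⟩,
      fun ω => (IsEmpty.false ω).elim⟩
  haveI : Nonempty X := ⟨(hne (Classical.arbitrary Ω)).some⟩
  set e := TopologicalSpace.denseSeq X with he
  have hd : DenseRange e := TopologicalSpace.denseRange_denseSeq X
  set p : ℕ → ℝ := fun k => (2 : ℝ)⁻¹ ^ k with hp
  have hppos : ∀ k, 0 < p k := fun k => pow_pos (by norm_num) k
  set B : ℕ × ℕ → Set X := fun i => Metric.closedBall (e i.1) (p i.2) with hB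
  set G : ℕ × ℕ → Ω → Set X := fun i ω =>
    if (F ω ∩ B i).Nonempty then F ω ∩ B i else F ω with hG
  have hGne : ∀ i ω, (G i ω).Nonempty := by
    intro i ω
    by_cases h : (F ω ∩ B i).Nonempty
    · simpa [hG, if_pos h] using h
    · simpa [hG, if_neg h] using hne ω
  have hGcl : ∀ i ω, IsClosed (G i ω) := by
    intro i ω
    by_cases h : (F ω ∩ B i).Nonempty
    · rw [hG]; simp only [if_pos h]; exact (hcl ω).inter Metric.isClosed_closedBall
    · rw [hG]; simp only [if_neg h]; exact hcl ω
  have hGsub : ∀ i ω, G i ω ⊆ F ω := by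
    intro i ω
    by_cases h : (F ω ∩ B i).Nonempty
    · rw [hG]; simp only [if_pos h]; exact Set.inter_subset_left
    · rw [hG]; simp only [if_neg h]; exact subset_rfl
  have hGhit : ∀ i, ∀ C : Set X, IsClosed C → MeasurableSet[𝒜] {ω | (G i ω ∩ C).Nonempty} := by
    intro i C hC
    have hkey : {ω | (G i ω ∩ C).Nonempty} = {ω | (F ω ∩ (B i ∩ C)).Nonempty} ∪
        ({ω | (F ω ∩ C).Nonempty} ∩ {ω | (F ω ∩ B i).Nonempty}ᶜ) := by
      ext ω
      by_cases h : (F ω ∩ B i).Nonempty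
      · have hGe : G i ω = F ω ∩ B i := by rw [hG]; simp only [if_pos h]
        simp only [Set.mem_union, Set.mem_inter_iff, Set.mem_compl_iff, Set.mem_setOf_eq,
          hGe, h, not_true, and_false, or_false]
        rw [Set.inter_assoc]
      · have hGe : G i ω = F ω := by rw [hG]; simp only [if_neg h]
        simp only [Set.mem_union, Set.mem_inter_iff, Set.mem_compl_iff, Set.mem_setOf_eq,
          hGe, h, not_false_iff, and_true]
        constructor
        · intro hConeC; exact Or.inr hConeC
        · rintro (⟨x, hx1, hx2, -⟩ | hx)
          · exact absurd ⟨x, hx1, hx2⟩ h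
          · exact hx
    rw [hkey]
    exact ((hF _ (Metric.isClosed_closedBall.inter hC))).union
      ((hF _ hC).inter (hF _ Metric.isClosed_closedBall).compl)
  have hsel : ∀ i : ℕ × ℕ, ∃ f : Ω → X, StronglyMeasurable[𝒜] f ∧ ∀ ω, f ω ∈ G i ω :=
    fun i => krn_selection (hGne i) (hGcl i) (hGhit i)
  choose f hfm hfmem using hsel
  refine ⟨f, fun i => ⟨hfm i, fun ω => hGsub i ω (hfmem i ω)⟩, ?_⟩
  intro ω x hx ε hε
  obtain ⟨k, hk⟩ := exists_pow_lt_of_lt_one (show (0:ℝ) < ε / 2 by linarith)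
    (show (2:ℝ)⁻¹ < 1 by norm_num)
  obtain ⟨n, hn⟩ := Metric.denseRange_iff.mp hd x (p k) (hppos k)
  have hxB : x ∈ B (n, k) := by
    simp only [hB, Metric.mem_closedBall]
    exact hn.le
  have hne' : (F ω ∩ B (n, k)).Nonempty := ⟨x, hx, hxB⟩
  have hGe : G (n, k) ω = F ω ∩ B (n, k) := by rw [hG]; simp only [if_pos hne']
  have hfB : f (n, k) ω ∈ B (n, k) := by
    have := hfmem (n, k) ω
    rw [hGe] at this
    exact this.2
  refine ⟨(n, k), ?_⟩
  have h1 : dist (f (n, k) ω) (e n) ≤ p k := by simpa [hB, Metric.mem_closedBall] using hfB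
  have h2 : dist (e n) x ≤ p k := by rw [dist_comm]; exact hn.le
  calc dist (f (n, k) ω) x ≤ dist (f (n, k) ω) (e n) + dist (e n) x := dist_triangle _ _ _
    _ ≤ p k + p k := add_le_add h1 h2
    _ < ε := by have : p k < ε / 2 := hk; linarith


end KRNsel

/-- a set-valued `𝔽`-martingale with convex integrably bounded values in a
separable reflexive Banach space starting at `F_0 = {0}` a.s. is a.s. a singleton for
every `t`, i.e. it degenerates to a vector-valued martingale. -/
theorem stmt_6 {Ω X : Type*} {m : MeasurableSpace Ω} (μ : @MeasureTheory.Measure Ω m)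
    [IsProbabilityMeasure μ]
    [NormedAddCommGroup X] [NormedSpace ℝ X] [CompleteSpace X]
    [TopologicalSpace.SeparableSpace X] [MeasurableSpace X] [BorelSpace X]
    (hrefl : IsReflexive X)
    (ℱ : MeasureTheory.Filtration ℝ≥0 m) (F : ℝ≥0 → Ω → Set X)
    (hsv : ∀ t, IsSVRV (ℱ t) (F t))
    (hconv : ∀ t ω, Convex ℝ (F t ω))
    (hbdd : ∀ t, ∃ ρ : Ω → ℝ, Integrable ρ μ ∧ ∀ ω, ∀ x ∈ F t ω, ‖x‖ ≤ ρ ω)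
    (hmart : SVMartingale ℱ μ 1 F)
    (h0 : ∀ᵐ ω ∂μ, F 0 ω = {0}) :
    ∀ t, ∀ᵐ ω ∂μ, ∃ x : X, F t ω = {x} := by
  classical
  intro t
  have hmt : ℱ t ≤ m := ℱ.le t
  have hm0 : ℱ 0 ≤ m := ℱ.le 0
  obtain ⟨ρ, hρint, hρbd⟩ := hbdd t
  obtain ⟨hptw, hhit⟩ := hsv t
  -- sel (ℱ 0) μ 1 (F 0) = {0}
  have sel0 : sel (ℱ 0) μ 1 (F 0) = {(0 : Lp X 1 μ)} := by
    apply Set.eq_singleton_iff_unique_mem.mpr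
    constructor
    · refine ⟨⟨fun _ => 0, stronglyMeasurable_const, Lp.coeFn_zero X 1 μ⟩, ?_⟩
      filter_upwards [h0, Lp.coeFn_zero X 1 μ] with ω h1 h2
      rw [h2, h1]; exact rfl
    · intro f hf
      refine Lp.ext ?_
      filter_upwards [hf.2, h0, Lp.coeFn_zero X 1 μ] with ω h1 h2 h3
      rw [h3]
      rw [h2] at h1
      exact h1
  have hclosure : closure (ceSel (ℱ 0) μ 1 (sel (ℱ t) μ 1 (F t))) = {(0 : Lp X 1 μ)} := by
    rw [← hmart 0 t zero_le, sel0]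
  -- key: every ℱt-measurable integrable selection of F t has zero conditional expectation at 0
  have key : ∀ f : Ω → X, StronglyMeasurable[ℱ t] f → Integrable f μ →
      (∀ᵐ ω ∂μ, f ω ∈ F t ω) → μ[f|ℱ 0] =ᵐ[μ] 0 := by
    intro f hfm hfint hfmem
    have hmem1 : MemLp f 1 μ := memLp_one_iff_integrable.mpr hfint
    set fL : Lp X 1 μ := hmem1.toLp f with hfL
    have hfLsel : fL ∈ sel (ℱ t) μ 1 (F t) := by
      constructor
      · exact ⟨f, hfm, hmem1.coeFn_toLp⟩
      · filter_upwards [hmem1.coeFn_toLp, hfmem] with ω h1 h2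
        rw [h1]; exact h2
    have hce : condExpL1 hm0 μ f ∈ ceSel (ℱ 0) μ 1 (sel (ℱ t) μ 1 (F t)) := by
      refine ⟨fL, hfLsel, ?_⟩
      have h1 : μ[f|ℱ 0] =ᵐ[μ] ⇑(condExpL1 hm0 μ f) := condExp_ae_eq_condExpL1 hm0 f
      have h2 : μ[(⇑fL)|ℱ 0] =ᵐ[μ] μ[f|ℱ 0] := condExp_congr_ae hmem1.coeFn_toLp
      exact h1.symm.trans h2.symm
    have h0' : condExpL1 hm0 μ f = 0 := by
      have := subset_closure hce
      rw [hclosure] at this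
      simpa using this
    have h1 : μ[f|ℱ 0] =ᵐ[μ] ⇑(condExpL1 hm0 μ f) := condExp_ae_eq_condExpL1 hm0 f
    rw [h0'] at h1
    exact h1.trans (Lp.coeFn_zero X 1 μ)
  -- hence every such selection has integral zero
  have hint0 : ∀ f : Ω → X, StronglyMeasurable[ℱ t] f → Integrable f μ →
      (∀ᵐ ω ∂μ, f ω ∈ F t ω) → ∫ ω, f ω ∂μ = 0 := by
    intro f hfm hfint hfmem
    have h1 : ∫ ω, (μ[f|ℱ 0]) ω ∂μ = ∫ ω, f ω ∂μ := integral_condExp hm0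
    have h2 : ∫ ω, (μ[f|ℱ 0]) ω ∂μ = 0 := by
      rw [integral_congr_ae (key f hfm hfint hfmem)]
      simp
    rw [← h1, h2]
  -- any two such selections agree a.e.
  have hae : ∀ f g : Ω → X, StronglyMeasurable[ℱ t] f → Integrable f μ →
      (∀ᵐ ω ∂μ, f ω ∈ F t ω) → StronglyMeasurable[ℱ t] g → Integrable g μ →
      (∀ᵐ ω ∂μ, g ω ∈ F t ω) → f =ᵐ[μ] g := by
    intro f g hfm hfint hfmem hgm hgint hgmem
    refine ae_eq_of_forall_setIntegral_eq_of_sigmaFinite' hmt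
      (fun s _ _ => hfint.integrableOn) (fun s _ _ => hgint.integrableOn) ?_
      hfm.aestronglyMeasurable hgm.aestronglyMeasurable
    intro s hs _
    -- the mixed selection
    set mix : Ω → X := s.indicator f + sᶜ.indicator g with hmix
    have hmixm : StronglyMeasurable[ℱ t] mix :=
      (hfm.indicator hs).add (hgm.indicator hs.compl)
    have hi1 : Integrable (s.indicator f) μ := hfint.indicator (hmt s hs)
    have hi2 : Integrable (sᶜ.indicator g) μ := hgint.indicator (hmt sᶜ hs.compl)
    have hmixint : Integrable mix μ := hi1.add hi2
    have hmixmem : ∀ᵐ ω ∂μ, mix ω ∈ F t ω := by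
      filter_upwards [hfmem, hgmem] with ω h1 h2
      by_cases hω : ω ∈ s
      · have : mix ω = f ω := by
          simp [hmix, Set.indicator_apply, hω]
        rw [this]; exact h1
      · have : mix ω = g ω := by
          simp [hmix, Set.indicator_apply, hω]
        rw [this]; exact h2
    have e1 : ∫ ω in s, f ω ∂μ + ∫ ω in sᶜ, g ω ∂μ = 0 := by
      have h := hint0 mix hmixm hmixint hmixmem
      have hrfl : ∫ ω, mix ω ∂μ = ∫ ω, (s.indicator f ω + sᶜ.indicator g ω) ∂μ := rfl
      rw [hrfl, integral_add hi1 hi2, integral_indicator (hmt s hs),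
        integral_indicator (hmt sᶜ hs.compl)] at h
      exact h
    have e2 : ∫ ω in s, g ω ∂μ + ∫ ω in sᶜ, g ω ∂μ = 0 := by
      rw [integral_add_compl (hmt s hs) hgint]
      exact hint0 g hgm hgint hgmem
    have := e1.trans e2.symm
    exact add_right_cancel this
  -- Castaing representation of F t
  obtain ⟨g, hg, hgdense⟩ := krn_castaing (𝒜 := ℱ t) (fun ω => (hptw ω).1)
    (fun ω => (hptw ω).2) hhit
  have hgint : ∀ i, Integrable (g i) μ := by
    intro i
    refine Integrable.mono' hρint ((hg i).1.mono hmt).aestronglyMeasurable ?_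
    exact Eventually.of_forall fun ω => hρbd ω _ ((hg i).2 ω)
  have hgae : ∀ i, g i =ᵐ[μ] g (0, 0) := fun i =>
    hae (g i) (g (0, 0)) (hg i).1 (hgint i) (Eventually.of_forall (hg i).2)
      (hg (0, 0)).1 (hgint (0, 0)) (Eventually.of_forall (hg (0, 0)).2)
  have hall : ∀ᵐ ω ∂μ, ∀ i : ℕ × ℕ, g i ω = g (0, 0) ω := ae_all_iff.mpr hgae
  filter_upwards [hall] with ω hω
  refine ⟨g (0, 0) ω, ?_⟩
  apply Set.eq_singleton_iff_unique_mem.mpr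
  refine ⟨(hg (0, 0)).2 ω, ?_⟩
  intro x hx
  by_contra hne
  have hd : 0 < dist x (g (0, 0) ω) := dist_pos.mpr hne
  obtain ⟨i, hi⟩ := hgdense ω x hx (dist x (g (0, 0) ω)) hd
  rw [hω i, dist_comm] at hi
  exact absurd hi (lt_irrefl _)
end
end

section
/- Let F be a set-valued 𝔽-submartingale with F_s, F_t ∈ L¹(Ω; K_bc(X)), X separable reflexive, and 0 ≤ s ≤ t. Then S_{F_s}(F_s) ⊆ {E[f | F_s] : f ∈ S_{F_t}(F_t)}; in particular, every integrable F_s-measurable selection of F_s extends to an integrable F_t-measurable selection of F_t whose conditional expectation given F_s is the chosen selection. -/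
open MeasureTheory Set Filter Topology Bornology
open scoped ENNReal NNReal Pointwise

noncomputable section

namespace Stmt9Aux
open NormedSpace


variable {E : Type*} [NormedAddCommGroup E] [NormedSpace ℝ E]

/-- The countable "rational span" of a sequence. -/
def QS (D : ℕ → E) : Set E :=
  Set.range (fun l : List (ℚ × ℕ) => (l.map fun p => (p.1 : ℝ) • D p.2).sum)

lemma QS_countable (D : ℕ → E) : (QS D).Countable := Set.countable_range _

lemma QS_zero (D : ℕ → E) : (0 : E) ∈ QS D := ⟨[], by simp⟩

lemma QS_mem (D : ℕ → E) (n : ℕ) : D n ∈ QS D := ⟨[(1, n)], by simp⟩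

lemma QS_add {D : ℕ → E} {x y : E} (hx : x ∈ QS D) (hy : y ∈ QS D) : x + y ∈ QS D := by
  obtain ⟨l, rfl⟩ := hx; obtain ⟨l', rfl⟩ := hy
  exact ⟨l ++ l', by simp [List.map_append, List.sum_append]⟩

private lemma QS_smul_aux {D : ℕ → E} (c : ℚ) (l : List (ℚ × ℕ)) :
    ((l.map fun p => (c * p.1, p.2)).map fun p => (p.1 : ℝ) • D p.2).sum
      = (c : ℝ) • (l.map fun p => (p.1 : ℝ) • D p.2).sum := by
  induction l with
  | nil => simp
  | cons a l ih =>
    simp only [List.map_cons, List.sum_cons, ih, smul_add, Rat.cast_mul, mul_smul]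

lemma QS_smul {D : ℕ → E} (c : ℚ) {x : E} (hx : x ∈ QS D) : (c : ℝ) • x ∈ QS D := by
  obtain ⟨l, rfl⟩ := hx
  exact ⟨l.map fun p => (c * p.1, p.2), QS_smul_aux c l⟩

lemma QS_dense {D : ℕ → E} (hD : DenseRange D) : Dense (QS D) :=
  hD.mono (Set.range_subset_iff.2 fun n => QS_mem D n)

/-- A normed space whose dual is separable is separable. -/
lemma separable_of_dual_separable (F : Type*) [NormedAddCommGroup F] [NormedSpace ℝ F]
    [TopologicalSpace.SeparableSpace (StrongDual ℝ F)] : TopologicalSpace.SeparableSpace F := by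
  haveI : Nonempty (StrongDual ℝ F) := ⟨0⟩
  set g : ℕ → StrongDual ℝ F := TopologicalSpace.denseSeq (StrongDual ℝ F) with hgdef
  have hg : DenseRange g := TopologicalSpace.denseRange_denseSeq (StrongDual ℝ F)
  have hx : ∀ n, ∃ x : F, ‖x‖ ≤ 1 ∧ ‖g n‖ / 2 ≤ g n x := by
    intro n
    by_cases h0 : g n = 0
    · exact ⟨0, by simp [h0]⟩
    · by_contra hcon
      push_neg at hcon
      have hb : ∀ x : F, ‖g n x‖ ≤ (‖g n‖ / 2) * ‖x‖ := by
        intro x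
        rcases eq_or_ne x 0 with rfl | hx0
        · simp
        · have hxlt : ∀ y : F, ‖y‖ ≤ 1 → ‖g n y‖ ≤ ‖g n‖ / 2 := by
            intro y hy
            rw [Real.norm_eq_abs, abs_le]
            constructor
            · have h2 := hcon (-y) (by simpa using hy)
              simp only [map_neg] at h2
              linarith [le_of_lt h2]
            · linarith [le_of_lt (hcon y hy)]
          have hu : ‖(‖x‖⁻¹ • x)‖ ≤ 1 := by
            rw [norm_smul, norm_inv, norm_norm]
            rw [inv_mul_cancel₀ (norm_ne_zero_iff.2 hx0)]
          have := hxlt _ hu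
          rw [ContinuousLinearMap.map_smul, norm_smul, norm_inv, norm_norm] at this
          have hxpos : (0:ℝ) < ‖x‖ := norm_pos_iff.2 hx0
          calc ‖g n x‖ = ‖x‖ * (‖x‖⁻¹ * ‖g n x‖) := by field_simp
          _ ≤ ‖x‖ * (‖g n‖ / 2) := by
              apply mul_le_mul_of_nonneg_left _ (le_of_lt hxpos)
              simpa [mul_comm] using this
          _ = ‖g n‖ / 2 * ‖x‖ := by ring
      have hnorm := ContinuousLinearMap.opNorm_le_bound (g n)
        (by positivity) hb
      have hpos : (0:ℝ) < ‖g n‖ := norm_pos_iff.2 h0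
      linarith
  choose x hx1 hx2 using hx
  refine ⟨⟨QS x, QS_countable x, ?_⟩⟩
  by_contra hd
  rw [dense_iff_closure_eq] at hd
  obtain ⟨v, hv⟩ := Set.ne_univ_iff_exists_notMem _ |>.1 hd
  -- the closure of `QS x` is an `ℝ`-submodule
  set S := QS x with hSdef
  have hclos_add : ∀ a ∈ closure S, ∀ b ∈ closure S, a + b ∈ closure S := by
    intro a ha b hb
    rw [mem_closure_iff_seq_limit] at ha hb ⊢
    obtain ⟨ua, hua, hualim⟩ := ha
    obtain ⟨ub, hub, hublim⟩ := hb
    exact ⟨fun n => ua n + ub n, fun n => QS_add (hua n) (hub n), hualim.add hublim⟩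
  have hclos_smul : ∀ (c : ℝ), ∀ a ∈ closure S, c • a ∈ closure S := by
    intro c a ha
    -- first, rational scalars
    have hrat : ∀ (r : ℚ), (r : ℝ) • a ∈ closure S := by
      intro r
      rw [mem_closure_iff_seq_limit] at ha ⊢
      obtain ⟨ua, hua, hualim⟩ := ha
      exact ⟨fun n => (r : ℝ) • ua n, fun n => QS_smul r (hua n),
        hualim.const_smul (r : ℝ)⟩
    obtain ⟨rs, hrs⟩ : ∃ rs : ℕ → ℚ, Tendsto (fun n => (rs n : ℝ)) atTop (𝓝 c) := by
      have : c ∈ closure (Set.range (fun r : ℚ => (r : ℝ))) := by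
        rw [Rat.denseRange_cast.closure_eq]; trivial
      obtain ⟨u, hu, hulim⟩ := mem_closure_iff_seq_limit.1 this
      choose rs hrs using hu
      refine ⟨rs, ?_⟩
      convert hulim using 1
      ext n; exact hrs n
    have : Tendsto (fun n => ((rs n : ℝ)) • a) atTop (𝓝 (c • a)) :=
      hrs.smul_const a
    have hcl : IsClosed (closure S) := isClosed_closure
    exact hcl.mem_of_tendsto this (Eventually.of_forall fun n => hrat (rs n))
  have hconv : Convex ℝ (closure S) := by
    intro a ha b hb ca cb _ _ _
    exact hclos_add _ (hclos_smul ca a ha) _ (hclos_smul cb b hb)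
  obtain ⟨f, u, hfu, hfv⟩ :=
    geometric_hahn_banach_closed_point hconv isClosed_closure hv
  have h0S : (0 : F) ∈ closure S := subset_closure (QS_zero x)
  have hupos : 0 < u := by have := hfu 0 h0S; simpa using this
  have hfS : ∀ a ∈ closure S, f a = 0 := by
    intro a ha
    by_contra hfa
    have hmem : ((u + 1) / f a) • a ∈ closure S := hclos_smul _ a ha
    have := hfu _ hmem
    rw [ContinuousLinearMap.map_smul, smul_eq_mul, div_mul_cancel₀ _ hfa] at this
    linarith
  have hfne : f ≠ 0 := by
    intro h
    rw [h] at hfv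
    simp only [ContinuousLinearMap.zero_apply] at hfv
    linarith
  have hfnorm : (0:ℝ) < ‖f‖ := norm_pos_iff.2 hfne
  set f' : StrongDual ℝ F := ‖f‖⁻¹ • f with hf'def
  have hf'norm : ‖f'‖ = 1 := by
    rw [hf'def, norm_smul, norm_inv, norm_norm, inv_mul_cancel₀ (ne_of_gt hfnorm)]
  obtain ⟨n, hn⟩ : ∃ n, dist f' (g n) < 1/4 := hg.exists_dist_lt f' (by norm_num)
  have hgn : (3:ℝ)/4 ≤ ‖g n‖ := by
    have h1 : ‖f' - g n‖ < 1/4 := by rwa [← dist_eq_norm]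
    have h2 : ‖f'‖ - ‖g n‖ ≤ ‖f' - g n‖ := norm_sub_norm_le _ _
    rw [hf'norm] at h2; linarith
  have hfxn : f' (x n) = 0 := by
    rw [hf'def]
    simp only [ContinuousLinearMap.smul_apply, smul_eq_mul]
    rw [hfS (x n) (subset_closure (QS_mem x n))]
    ring
  have hclose : ‖g n (x n) - f' (x n)‖ ≤ 1/4 := by
    have : g n (x n) - f' (x n) = (g n - f') (x n) := by
      simp [ContinuousLinearMap.sub_apply]
    rw [this]
    calc ‖(g n - f') (x n)‖ ≤ ‖g n - f'‖ * ‖x n‖ := (g n - f').le_opNorm _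
    _ ≤ ‖g n - f'‖ * 1 := by
        apply mul_le_mul_of_nonneg_left (hx1 n) (norm_nonneg _)
    _ ≤ 1/4 := by
        rw [mul_one, ← dist_eq_norm, dist_comm]
        exact le_of_lt hn
  rw [hfxn, sub_zero, Real.norm_eq_abs] at hclose
  have := hx2 n
  have habs : g n (x n) ≤ 1/4 := le_trans (le_abs_self _) hclose
  linarith



open scoped Classical in
/-- Limit of a real sequence along an ultrafilter (junk value if no limit). -/
def ulim (U : Ultrafilter ℕ) (a : ℕ → ℝ) : ℝ :=
  if h : ∃ L, Tendsto a ↑U (𝓝 L) then h.choose else 0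

lemma ulim_spec {U : Ultrafilter ℕ} {a : ℕ → ℝ} (h : ∃ L, Tendsto a ↑U (𝓝 L)) :
    Tendsto a ↑U (𝓝 (ulim U a)) := by
  rw [ulim, dif_pos h]; exact h.choose_spec

lemma exists_ulim {U : Ultrafilter ℕ} {a : ℕ → ℝ} {C : ℝ} (h : ∀ n, |a n| ≤ C) :
    ∃ L, Tendsto a ↑U (𝓝 L) := by
  have hle : ↑(U.map a) ≤ 𝓟 (Set.Icc (-C) C) := by
    rw [Ultrafilter.coe_map, le_principal_iff, mem_map]
    have hmem : ∀ n, a n ∈ Set.Icc (-C) C := by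
      intro n
      obtain ⟨h1, h2⟩ := abs_le.mp (h n)
      exact ⟨h1, h2⟩
    exact univ_mem' hmem
  obtain ⟨L, _, hL⟩ := isCompact_Icc.ultrafilter_le_nhds (U.map a) hle
  rw [Ultrafilter.coe_map] at hL
  exact ⟨L, hL⟩

lemma tendsto_ulim {U : Ultrafilter ℕ} {a : ℕ → ℝ} {C : ℝ} (h : ∀ n, |a n| ≤ C) :
    Tendsto a ↑U (𝓝 (ulim U a)) := ulim_spec (exists_ulim h)

lemma ulim_eq {U : Ultrafilter ℕ} {a : ℕ → ℝ} {L : ℝ} (h : Tendsto a ↑U (𝓝 L)) :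
    ulim U a = L := tendsto_nhds_unique (ulim_spec ⟨L, h⟩) h

variable {X : Type*} [NormedAddCommGroup X] [NormedSpace ℝ X] [CompleteSpace X]

/-- Reconstruction of a vector from a bounded additive functional on a countable dense
rational-subspace of the dual, via reflexivity. -/
lemma reconstruct (hrefl : Function.Surjective ⇑(inclusionInDoubleDual ℝ X))
    {Q : Set (StrongDual ℝ X)} (hQd : Dense Q)
    (hadd : ∀ p ∈ Q, ∀ q ∈ Q, p + q ∈ Q)
    (hsmul : ∀ (c : ℚ), ∀ q ∈ Q, (c : ℝ) • q ∈ Q)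
    (ψ : StrongDual ℝ X → ℝ) (K : ℝ) (hK : 0 ≤ K)
    (hψadd : ∀ p ∈ Q, ∀ q ∈ Q, ψ (p + q) = ψ p + ψ q)
    (hψsmul : ∀ (c : ℚ), ∀ q ∈ Q, ψ ((c : ℝ) • q) = c * ψ q)
    (hψbd : ∀ q ∈ Q, |ψ q| ≤ K * ‖q‖) :
    ∃ x : X, ‖x‖ ≤ K ∧ ∀ q ∈ Q, q x = ψ q := by
  -- ψ is Lipschitz on Q
  have hsub : ∀ p ∈ Q, ∀ q ∈ Q, p - q ∈ Q := by
    intro p hp q hq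
    have := hadd p hp _ (hsmul (-1) q hq)
    have h' : ((-1 : ℚ) : ℝ) • q = -q := by push_cast; exact neg_one_smul ℝ q
    rw [h'] at this
    simpa [sub_eq_add_neg] using this
  have hψsub : ∀ p ∈ Q, ∀ q ∈ Q, ψ (p - q) = ψ p - ψ q := by
    intro p hp q hq
    have h1 := hψadd p hp _ (hsmul (-1) q hq)
    have h2 := hψsmul (-1) q hq
    rw [sub_eq_add_neg]
    have : ((-1 : ℚ) : ℝ) • q = -q := by push_cast; exact neg_one_smul ℝ q
    rw [this] at h1 h2
    rw [h1, h2]; push_cast; ring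
  have hlip : LipschitzOnWith K.toNNReal ψ Q := by
    apply LipschitzOnWith.of_dist_le_mul
    intro p hp q hq
    rw [Real.dist_eq, dist_eq_norm, ← hψsub p hp q hq]
    calc |ψ (p - q)| ≤ K * ‖p - q‖ := hψbd _ (hsub p hp q hq)
    _ ≤ ↑K.toNNReal * ‖p - q‖ := by
        apply mul_le_mul_of_nonneg_right _ (norm_nonneg _)
        exact Real.le_coe_toNNReal K
  obtain ⟨Φ, hΦlip, hΦeq⟩ := hlip.extend_real
  -- sequences into Q
  have hseq : ∀ y : StrongDual ℝ X, ∃ u : ℕ → StrongDual ℝ X,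
      (∀ n, u n ∈ Q) ∧ Tendsto u atTop (𝓝 y) := fun y =>
    mem_closure_iff_seq_limit.1 (hQd y)
  choose sq hsqQ hsqlim using hseq
  have hΦq : ∀ q ∈ Q, Φ q = ψ q := fun q hq => (hΦeq hq).symm
  have hΦcont : Continuous Φ := hΦlip.continuous
  have hΦlim : ∀ y : StrongDual ℝ X, Tendsto (fun n => ψ (sq y n)) atTop (𝓝 (Φ y)) := by
    intro y
    have := (hΦcont.tendsto y).comp (hsqlim y)
    convert this using 1
    ext n
    simp only [Function.comp_apply, hΦq _ (hsqQ y n)]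
  have hΦadd : ∀ y z : StrongDual ℝ X, Φ (y + z) = Φ y + Φ z := by
    intro y z
    have h1 : Tendsto (fun n => ψ (sq y n + sq z n)) atTop (𝓝 (Φ (y + z))) := by
      have hl : Tendsto (fun n => sq y n + sq z n) atTop (𝓝 (y + z)) :=
        (hsqlim y).add (hsqlim z)
      have := (hΦcont.tendsto (y + z)).comp hl
      convert this using 1
      ext n
      simp only [Function.comp_apply, hΦq _ (hadd _ (hsqQ y n) _ (hsqQ z n))]
    have h2 : Tendsto (fun n => ψ (sq y n + sq z n)) atTop (𝓝 (Φ y + Φ z)) := by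
      have : (fun n => ψ (sq y n + sq z n)) = fun n => ψ (sq y n) + ψ (sq z n) := by
        ext n; exact hψadd _ (hsqQ y n) _ (hsqQ z n)
      rw [this]
      exact (hΦlim y).add (hΦlim z)
    exact tendsto_nhds_unique h1 h2
  have hΦsmul : ∀ (c : ℝ) (y : StrongDual ℝ X), Φ (c • y) = c * Φ y := by
    intro c y
    obtain ⟨rs, hrslim⟩ : ∃ rs : ℕ → ℚ, Tendsto (fun n => (rs n : ℝ)) atTop (𝓝 c) := by
      have : c ∈ closure (Set.range (fun r : ℚ => (r : ℝ))) := by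
        rw [Rat.denseRange_cast.closure_eq]; trivial
      obtain ⟨u, hu, hulim⟩ := mem_closure_iff_seq_limit.1 this
      choose rs hrs using hu
      exact ⟨rs, by convert hulim using 1; ext n; exact hrs n⟩
    have h1 : Tendsto (fun n => ψ ((rs n : ℝ) • sq y n)) atTop (𝓝 (Φ (c • y))) := by
      have hl : Tendsto (fun n => (rs n : ℝ) • sq y n) atTop (𝓝 (c • y)) :=
        hrslim.smul (hsqlim y)
      have := (hΦcont.tendsto (c • y)).comp hl
      convert this using 1
      ext n
      simp only [Function.comp_apply, hΦq _ (hsmul (rs n) _ (hsqQ y n))]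
    have h2 : Tendsto (fun n => ψ ((rs n : ℝ) • sq y n)) atTop (𝓝 (c * Φ y)) := by
      have : (fun n => ψ ((rs n : ℝ) • sq y n)) = fun n => (rs n : ℝ) * ψ (sq y n) := by
        ext n; exact hψsmul (rs n) _ (hsqQ y n)
      rw [this]
      exact hrslim.mul (hΦlim y)
    exact tendsto_nhds_unique h1 h2
  have hΦbd : ∀ y : StrongDual ℝ X, |Φ y| ≤ K * ‖y‖ := by
    intro y
    have h1 : Tendsto (fun n => |ψ (sq y n)|) atTop (𝓝 |Φ y|) :=
      (continuous_abs.tendsto _).comp (hΦlim y)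
    have h2 : Tendsto (fun n => K * ‖sq y n‖) atTop (𝓝 (K * ‖y‖)) :=
      tendsto_const_nhds.mul ((continuous_norm.tendsto _).comp (hsqlim y))
    exact le_of_tendsto_of_tendsto' h1 h2 fun n => hψbd _ (hsqQ y n)
  -- build the double-dual element
  set Λlin : StrongDual ℝ X →ₗ[ℝ] ℝ :=
    { toFun := Φ
      map_add' := hΦadd
      map_smul' := fun c y => by simp [hΦsmul c y] }
  set Λ : StrongDual ℝ (StrongDual ℝ X) := Λlin.mkContinuous K (fun y => by
    rw [Real.norm_eq_abs]; exact hΦbd y)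
  obtain ⟨x, hx⟩ := hrefl Λ
  refine ⟨x, ?_, ?_⟩
  · have h1 : ‖inclusionInDoubleDual ℝ X x‖ = ‖x‖ := by
      have : inclusionInDoubleDual ℝ X x = inclusionInDoubleDualLi ℝ x := rfl
      rw [this, (inclusionInDoubleDualLi ℝ).norm_map]
    rw [← h1, hx]
    exact le_trans (Λlin.mkContinuous_norm_le hK _) le_rfl
  · intro q hq
    have : (inclusionInDoubleDual ℝ X x) q = q x := dual_def ℝ X x q
    rw [← this, hx]
    exact hΦq q hq



variable {X : Type*} [NormedAddCommGroup X] [NormedSpace ℝ X]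

lemma norm_eq_ciSup {Q : Set (StrongDual ℝ X)} (hQd : Dense Q) (h0 : (0 : StrongDual ℝ X) ∈ Q)
    (hsmul : ∀ (c : ℚ), ∀ q ∈ Q, (c : ℝ) • q ∈ Q) (v : X) :
    ‖v‖ = ⨆ q : {q : StrongDual ℝ X // q ∈ Q ∧ ‖q‖ ≤ 1}, q.1 v := by
  haveI hne : Nonempty {q : StrongDual ℝ X // q ∈ Q ∧ ‖q‖ ≤ 1} :=
    ⟨⟨0, h0, by simp⟩⟩
  have hbdd : BddAbove (Set.range fun q : {q : StrongDual ℝ X // q ∈ Q ∧ ‖q‖ ≤ 1} => q.1 v) := by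
    refine ⟨‖v‖, ?_⟩
    rintro y ⟨q, rfl⟩
    calc q.1 v ≤ ‖q.1 v‖ := le_abs_self _
    _ ≤ ‖q.1‖ * ‖v‖ := q.1.le_opNorm v
    _ ≤ 1 * ‖v‖ := mul_le_mul_of_nonneg_right q.2.2 (norm_nonneg v)
    _ = ‖v‖ := one_mul _
  apply le_antisymm
  · apply le_of_forall_lt
    intro c hc
    rcases eq_or_ne v 0 with rfl | hv
    · have h0le := le_ciSup hbdd ⟨(0 : StrongDual ℝ X), h0, by simp⟩
      simp only [ContinuousLinearMap.zero_apply] at h0le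
      simp only [norm_zero] at hc
      exact lt_of_lt_of_le hc h0le
    · have hvpos : (0:ℝ) < ‖v‖ := norm_pos_iff.2 hv
      obtain ⟨g, hg1, hg2⟩ := exists_dual_vector ℝ v (norm_ne_zero_iff.2 hv)
      have hgv : g v = ‖v‖ := by exact_mod_cast hg2
      set ε : ℝ := ‖v‖ - c with hεdef
      have hε : 0 < ε := sub_pos.2 hc
      have hεc : c = ‖v‖ - ε := by rw [hεdef]; ring
      set δ : ℝ := min (ε / (4 * ‖v‖)) (1/2) with hδdef
      have hδ0 : 0 < δ := lt_min (by positivity) (by norm_num)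
      have hδhalf : δ ≤ 1/2 := min_le_right _ _
      have hδε : δ ≤ ε / (4 * ‖v‖) := min_le_left _ _
      clear_value δ
      clear hδdef
      obtain ⟨q₀, hq₀Q, hq₀d⟩ := Metric.mem_closure_iff.1 (hQd g) δ hδ0
      have hq₀g : ‖q₀ - g‖ < δ := by rwa [dist_comm, dist_eq_norm] at hq₀d
      have h1δ : (0:ℝ) < 1 + δ := by linarith
      have h1mδ : (0:ℝ) < 1 - δ := by linarith
      obtain ⟨r, hr1, hr2⟩ := exists_rat_btwn
        (show (1-δ)/(1+δ) < 1/(1+δ) by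
          rw [div_lt_div_iff₀ h1δ h1δ]; nlinarith)
      have hr0 : (0:ℝ) < r := lt_trans (by positivity) hr1
      set q : StrongDual ℝ X := (r : ℝ) • q₀ with hqdef
      have hqQ : q ∈ Q := hsmul r q₀ hq₀Q
      have hq₀n : ‖q₀‖ < 1 + δ := by
        calc ‖q₀‖ ≤ ‖q₀ - g‖ + ‖g‖ := by
              simpa using norm_add_le (q₀ - g) g
        _ < 1 + δ := by rw [hg1]; linarith
      have hqn : ‖q‖ ≤ 1 := by
        rw [hqdef, norm_smul, Real.norm_eq_abs, abs_of_pos hr0]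
        have hstep : (r:ℝ) * ‖q₀‖ ≤ (r:ℝ) * (1+δ) :=
          mul_le_mul_of_nonneg_left hq₀n.le hr0.le
        have hstep2 : (r:ℝ) * (1+δ) ≤ (1/(1+δ)) * (1+δ) :=
          mul_le_mul_of_nonneg_right hr2.le h1δ.le
        have hstep3 : (1/(1+δ)) * (1+δ) = 1 := by field_simp
        linarith
      have hq₀v : ‖v‖ - δ * ‖v‖ < q₀ v := by
        have h1 : |q₀ v - g v| ≤ ‖q₀ - g‖ * ‖v‖ := by
          have heq2 : q₀ v - g v = (q₀ - g) v := by simp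
          rw [heq2, ← Real.norm_eq_abs]
          exact (q₀ - g).le_opNorm v
        have h2 : ‖q₀ - g‖ * ‖v‖ < δ * ‖v‖ := mul_lt_mul_of_pos_right hq₀g hvpos
        have h3 : g v - ‖q₀ - g‖ * ‖v‖ ≤ q₀ v := by
          have := (abs_le.1 h1).1
          linarith
        rw [hgv] at h3
        linarith
      have hδv : δ * ‖v‖ ≤ ε / 4 := by
        have hh := mul_le_mul_of_nonneg_right hδε (le_of_lt hvpos)
        calc δ * ‖v‖ ≤ ε / (4 * ‖v‖) * ‖v‖ := hh
        _ = ε / 4 := by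
            rw [div_mul_eq_mul_div, mul_comm (4:ℝ) ‖v‖, ← div_div,
              mul_div_assoc, div_self (ne_of_gt hvpos), mul_one]
      have hq1 : q v = (r:ℝ) * (q₀ v) := by rw [hqdef]; simp
      have hδss : δ * ‖v‖ ≤ (1/2) * ‖v‖ := mul_le_mul_of_nonneg_right hδhalf hvpos.le
      clear_value q
      clear hqdef
      have hkey : ‖v‖ - 3 * (δ * ‖v‖) ≤ ((1-δ)/(1+δ)) * (‖v‖ - δ * ‖v‖) := by
        rw [div_mul_eq_mul_div, le_div_iff₀ h1δ]
        have h4 : (0:ℝ) ≤ δ * δ * ‖v‖ := by positivity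
        nlinarith [h4]
      have hq₀vpos : (0:ℝ) < q₀ v := by linarith
      have hclt : c < ((1-δ)/(1+δ)) * (‖v‖ - δ * ‖v‖) := by linarith
      have hrq : ((1-δ)/(1+δ)) * (‖v‖ - δ * ‖v‖) ≤ (r:ℝ) * q₀ v := by
        apply mul_le_mul hr1.le hq₀v.le (by linarith) hr0.le
      have hfin : c < q v := by rw [hq1]; linarith
      exact lt_of_lt_of_le hfin (le_ciSup hbdd ⟨q, hqQ, hqn⟩)
  · apply ciSup_le
    intro q
    calc q.1 v ≤ ‖q.1 v‖ := le_abs_self _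
    _ ≤ ‖q.1‖ * ‖v‖ := q.1.le_opNorm v
    _ ≤ 1 * ‖v‖ := mul_le_mul_of_nonneg_right q.2.2 (norm_nonneg v)
    _ = ‖v‖ := one_mul _

lemma measurable_sSup_image {Ω : Type*} {𝒜 : MeasurableSpace Ω} {Y : Type*}
    [TopologicalSpace Y] (F : Ω → Set Y)
    (hne : ∀ ω, (F ω).Nonempty)
    (hhit : ∀ C : Set Y, IsClosed C → MeasurableSet[𝒜] {ω | (F ω ∩ C).Nonempty})
    (φ : Y → ℝ) (hφ : Continuous φ) (hbd : ∀ ω, BddAbove (φ '' F ω)) :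
    Measurable[𝒜] fun ω => sSup (φ '' F ω) := by
  apply measurable_of_Ioi
  intro c
  have heq : (fun ω => sSup (φ '' F ω)) ⁻¹' (Set.Ioi c) =
      ⋃ n : ℕ, {ω | (F ω ∩ {x | c + 1/(n+1) ≤ φ x}).Nonempty} := by
    ext ω
    simp only [Set.mem_preimage, Set.mem_Ioi, Set.mem_iUnion, Set.mem_setOf_eq]
    constructor
    · intro hc
      obtain ⟨y, hy, hcy⟩ := exists_lt_of_lt_csSup (Set.Nonempty.image φ (hne ω)) hc
      obtain ⟨x, hxF, rfl⟩ := hy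
      obtain ⟨n, hn⟩ := exists_nat_one_div_lt (sub_pos.2 hcy)
      refine ⟨n, x, hxF, ?_⟩
      simp only [Set.mem_setOf_eq]
      linarith
    · rintro ⟨n, x, hxF, hx⟩
      have h1 : φ x ≤ sSup (φ '' F ω) := le_csSup (hbd ω) ⟨x, hxF, rfl⟩
      simp only [Set.mem_setOf_eq] at hx
      have h2 : (0:ℝ) < 1/((n:ℝ)+1) := by positivity
      linarith
  rw [heq]
  exact MeasurableSet.iUnion fun n =>
    hhit _ (isClosed_le continuous_const hφ)



section Wrap
variable {Ω : Type*} {mΩ : MeasurableSpace Ω}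

lemma wMeasSet_eq {f g : Ω → ℝ} (hf : Measurable[mΩ] f) (hg : Measurable[mΩ] g) :
    MeasurableSet[mΩ] {ω | f ω = g ω} := measurableSet_eq_fun hf hg

lemma wMeasSet_le {f g : Ω → ℝ} (hf : Measurable[mΩ] f) (hg : Measurable[mΩ] g) :
    MeasurableSet[mΩ] {ω | f ω ≤ g ω} := measurableSet_le hf hg

lemma wMeasSet_lt_const {f : Ω → ℝ} (hf : Measurable[mΩ] f) (c : ℝ) :
    MeasurableSet[mΩ] {ω | f ω < c} := measurableSet_lt hf measurable_const

lemma wAbs {f : Ω → ℝ} (hf : Measurable[mΩ] f) : Measurable[mΩ] fun ω => |f ω| := hf.abs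

lemma wAdd {f g : Ω → ℝ} (hf : Measurable[mΩ] f) (hg : Measurable[mΩ] g) :
    Measurable[mΩ] fun ω => f ω + g ω := hf.add hg

lemma wConstMul {f : Ω → ℝ} (hf : Measurable[mΩ] f) (c : ℝ) :
    Measurable[mΩ] fun ω => c * f ω := hf.const_mul c

lemma wMulConst {f : Ω → ℝ} (hf : Measurable[mΩ] f) (c : ℝ) :
    Measurable[mΩ] fun ω => f ω * c := hf.mul_const c

lemma wSubConst {f : Ω → ℝ} (hf : Measurable[mΩ] f) (c : ℝ) :
    Measurable[mΩ] fun ω => f ω - c := hf.sub measurable_const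

lemma wIndicator {f : Ω → ℝ} (hf : Measurable[mΩ] f) {s : Set Ω}
    (hs : MeasurableSet[mΩ] s) : Measurable[mΩ] (s.indicator f) := hf.indicator hs

lemma wISup {ι : Sort*} [Countable ι] {f : ι → Ω → ℝ}
    (hf : ∀ i, Measurable[mΩ] (f i)) : Measurable[mΩ] fun ω => ⨆ i, f i ω :=
  Measurable.iSup hf

lemma wTendsto {f : ℕ → Ω → ℝ} {g : Ω → ℝ} (hf : ∀ n, Measurable[mΩ] (f n))
    (h : ∀ ω, Tendsto (fun n => f n ω) atTop (𝓝 (g ω))) : Measurable[mΩ] g :=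
  measurable_of_tendsto_metrizable' atTop hf (tendsto_pi_nhds.2 h)

lemma wOfIsOpen {X : Type*} [TopologicalSpace X] [MeasurableSpace X] [BorelSpace X]
    {f : Ω → X} (h : ∀ s : Set X, IsOpen s → MeasurableSet[mΩ] (f ⁻¹' s)) :
    Measurable[mΩ] f := measurable_of_isOpen h

lemma wSM {X : Type*} [TopologicalSpace X] [TopologicalSpace.PseudoMetrizableSpace X]
    [SecondCountableTopology X] [MeasurableSpace X] [OpensMeasurableSpace X]
    {f : Ω → X} (hf : Measurable[mΩ] f) : StronglyMeasurable[mΩ] f :=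
  hf.stronglyMeasurable

lemma wIUnion {ι : Sort*} [Countable ι] {f : ι → Set Ω}
    (h : ∀ i, MeasurableSet[mΩ] (f i)) : MeasurableSet[mΩ] (⋃ i, f i) :=
  MeasurableSet.iUnion h

lemma wBiInter {ι : Type*} {S : Set ι} (hS : S.Countable) {f : ι → Set Ω}
    (h : ∀ i ∈ S, MeasurableSet[mΩ] (f i)) : MeasurableSet[mΩ] (⋂ i ∈ S, f i) :=
  MeasurableSet.biInter hS h

lemma wIInter {ι : Sort*} [Countable ι] {f : ι → Set Ω}
    (h : ∀ i, MeasurableSet[mΩ] (f i)) : MeasurableSet[mΩ] (⋂ i, f i) :=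
  MeasurableSet.iInter h

lemma wInter {A B : Set Ω} (hA : MeasurableSet[mΩ] A) (hB : MeasurableSet[mΩ] B) :
    MeasurableSet[mΩ] (A ∩ B) := hA.inter hB

end Wrap



/-- Core construction: an exact selection with prescribed conditional expectation. -/
lemma abs_integral_le {α : Type*} {mα : MeasurableSpace α} {μ : @MeasureTheory.Measure α mα}
    (f : α → ℝ) : |∫ x, f x ∂μ| ≤ ∫ x, |f x| ∂μ := by
  rw [← Real.norm_eq_abs]
  refine le_trans (norm_integral_le_integral_norm f) (le_of_eq ?_)
  simp [Real.norm_eq_abs]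

set_option maxHeartbeats 2000000 in
theorem key {Ω X : Type*} {ms mt : MeasurableSpace Ω} {m : MeasurableSpace Ω}
    {μ : @MeasureTheory.Measure Ω m}
    [IsProbabilityMeasure μ]
    [NormedAddCommGroup X] [NormedSpace ℝ X] [CompleteSpace X]
    [TopologicalSpace.SeparableSpace X] [MeasurableSpace X] [BorelSpace X]
    (hrefl : Function.Surjective ⇑(inclusionInDoubleDual ℝ X))
    (hms : ms ≤ m) (hmt : mt ≤ m) (hsmt : ms ≤ mt)
    {FF : Ω → Set X}
    (hFne : ∀ ω, (FF ω).Nonempty) (hFcl : ∀ ω, IsClosed (FF ω))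
    (hFcv : ∀ ω, Convex ℝ (FF ω))
    (hhit : ∀ C : Set X, IsClosed C → MeasurableSet[mt] {ω | (FF ω ∩ C).Nonempty})
    {ρ : Ω → ℝ} (hρint : Integrable ρ μ) (hρbd : ∀ ω, ∀ x ∈ FF ω, ‖x‖ ≤ ρ ω)
    {G : ℕ → Ω → X} (hGmeas : ∀ n, AEStronglyMeasurable[mt] (G n) μ)
    (hGmem : ∀ n, ∀ᵐ ω ∂μ, G n ω ∈ FF ω) (hGint : ∀ n, Integrable (G n) μ)
    {f : Ω → X}
    (hflim : ∀ A : Set Ω, MeasurableSet[ms] A →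
      Tendsto (fun n => ∫ ω in A, G n ω ∂μ) atTop (𝓝 (∫ ω in A, f ω ∂μ))) :
    ∃ g : Ω → X, StronglyMeasurable[mt] g ∧ Integrable g μ ∧
      (∀ᵐ ω ∂μ, g ω ∈ FF ω) ∧
      ∀ A : Set Ω, MeasurableSet[ms] A → ∫ ω in A, g ω ∂μ = ∫ ω in A, f ω ∂μ := by
  classical
  haveI : SigmaFinite (μ.trim hmt) := by
    haveI : IsFiniteMeasure (μ.trim hmt) := isFiniteMeasure_trim hmt
    infer_instance
  -- countable rational-dense subset of the dual
  haveI hsep2 : TopologicalSpace.SeparableSpace (StrongDual ℝ (StrongDual ℝ X)) :=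
    hrefl.denseRange.separableSpace (inclusionInDoubleDual ℝ X).continuous
  haveI hsep : TopologicalSpace.SeparableSpace (StrongDual ℝ X) :=
    separable_of_dual_separable (StrongDual ℝ X)
  haveI : Nonempty (StrongDual ℝ X) := ⟨0⟩
  set D : ℕ → StrongDual ℝ X := TopologicalSpace.denseSeq (StrongDual ℝ X) with hD
  have hDdr : DenseRange D := TopologicalSpace.denseRange_denseSeq _
  set Q : Set (StrongDual ℝ X) := QS D with hQ
  have hQc : Q.Countable := QS_countable D
  have hQd : Dense Q := QS_dense hDdr
  have hQ0 : (0 : StrongDual ℝ X) ∈ Q := QS_zero D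
  have hQadd : ∀ p ∈ Q, ∀ q ∈ Q, p + q ∈ Q := fun p hp q hq => QS_add hp hq
  have hQsmul : ∀ (c : ℚ), ∀ q ∈ Q, (c : ℝ) • q ∈ Q := fun c q hq => QS_smul c hq
  -- support functions
  set sfn : StrongDual ℝ X → Ω → ℝ := fun q ω => sSup ((fun x => q x) '' FF ω) with hsfn
  set snorm : Ω → ℝ := fun ω => sSup ((fun x => ‖x‖) '' FF ω) with hsnorm
  have hρ0 : ∀ ω, 0 ≤ ρ ω := fun ω => by
    obtain ⟨x, hx⟩ := hFne ω; exact le_trans (norm_nonneg x) (hρbd ω x hx)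
  have hbddn : ∀ ω, BddAbove ((fun x => ‖x‖) '' FF ω) := fun ω =>
    ⟨ρ ω, by rintro y ⟨x, hx, rfl⟩; exact hρbd ω x hx⟩
  have hbddq : ∀ (q : StrongDual ℝ X) (ω : Ω), BddAbove ((fun x => q x) '' FF ω) := by
    intro q ω
    refine ⟨‖q‖ * ρ ω, ?_⟩
    rintro y ⟨x, hx, rfl⟩
    calc q x ≤ ‖q x‖ := le_abs_self _
    _ ≤ ‖q‖ * ‖x‖ := q.le_opNorm x
    _ ≤ ‖q‖ * ρ ω := mul_le_mul_of_nonneg_left (hρbd ω x hx) (norm_nonneg q)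
  have hsn0 : ∀ ω, 0 ≤ snorm ω := fun ω => by
    obtain ⟨x, hx⟩ := hFne ω
    exact le_trans (norm_nonneg x) (le_csSup (hbddn ω) ⟨x, hx, rfl⟩)
  have hsnρ : ∀ ω, snorm ω ≤ ρ ω := fun ω =>
    csSup_le ((hFne ω).image _) (by rintro y ⟨x, hx, rfl⟩; exact hρbd ω x hx)
  have hle_sn : ∀ ω, ∀ x ∈ FF ω, ‖x‖ ≤ snorm ω := fun ω x hx =>
    le_csSup (hbddn ω) ⟨x, hx, rfl⟩
  have hle_sfn : ∀ (q : StrongDual ℝ X) (ω : Ω), ∀ x ∈ FF ω, q x ≤ sfn q ω := fun q ω x hx =>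
    le_csSup (hbddq q ω) ⟨x, hx, rfl⟩
  have hsfn_le : ∀ (q : StrongDual ℝ X) (ω : Ω), |sfn q ω| ≤ ‖q‖ * snorm ω := by
    intro q ω
    rw [abs_le]
    constructor
    · obtain ⟨x, hx⟩ := hFne ω
      have h1 : q x ≤ sfn q ω := hle_sfn q ω x hx
      have h2 : -(‖q‖ * snorm ω) ≤ q x := by
        have := neg_abs_le (q x)
        have h3 : |q x| ≤ ‖q‖ * ‖x‖ := q.le_opNorm x
        have h4 : ‖q‖ * ‖x‖ ≤ ‖q‖ * snorm ω :=
          mul_le_mul_of_nonneg_left (hle_sn ω x hx) (norm_nonneg q)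
        linarith
      linarith
    · apply csSup_le ((hFne ω).image _)
      rintro y ⟨x, hx, rfl⟩
      calc q x ≤ |q x| := le_abs_self _
      _ ≤ ‖q‖ * ‖x‖ := q.le_opNorm x
      _ ≤ ‖q‖ * snorm ω :=
          mul_le_mul_of_nonneg_left (hle_sn ω x hx) (norm_nonneg q)
  have hsfn_lip : ∀ (p q : StrongDual ℝ X) (ω : Ω),
      sfn q ω ≤ sfn p ω + ‖q - p‖ * snorm ω := by
    intro p q ω
    apply csSup_le ((hFne ω).image _)
    rintro y ⟨x, hx, rfl⟩
    have h1 : q x = p x + (q - p) x := by simp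
    have h2 : (q - p) x ≤ ‖q - p‖ * ‖x‖ :=
      le_trans (le_abs_self _) ((q - p).le_opNorm x)
    have h3 : ‖q - p‖ * ‖x‖ ≤ ‖q - p‖ * snorm ω :=
      mul_le_mul_of_nonneg_left (hle_sn ω x hx) (norm_nonneg _)
    have h4 : p x ≤ sfn p ω := hle_sfn p ω x hx
    linarith
  -- measurability and integrability of support functions
  have hsnm : Measurable[mt] snorm :=
    measurable_sSup_image FF hFne hhit _ continuous_norm hbddn
  have hsfnm : ∀ q : StrongDual ℝ X, Measurable[mt] (sfn q) := fun q =>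
    measurable_sSup_image FF hFne hhit _ q.continuous (hbddq q)
  have hsnasm : AEStronglyMeasurable snorm μ :=
    ((hsnm.mono hmt le_rfl).stronglyMeasurable).aestronglyMeasurable
  have hsnint : Integrable snorm μ := by
    apply Integrable.mono' hρint hsnasm
    exact Eventually.of_forall fun ω => by
      rw [Real.norm_eq_abs, abs_of_nonneg (hsn0 ω)]; exact hsnρ ω
  have hsfnint : ∀ q : StrongDual ℝ X, Integrable (sfn q) μ := by
    intro q
    apply Integrable.mono' (hsnint.const_mul ‖q‖)
      (((hsfnm q).mono hmt le_rfl).stronglyMeasurable).aestronglyMeasurable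
    exact Eventually.of_forall fun ω => by
      rw [Real.norm_eq_abs]; exact hsfn_le q ω
  -- facts about the approximating sequence
  have hGρ : ∀ n, ∀ᵐ ω ∂μ, ‖G n ω‖ ≤ snorm ω := by
    intro n
    filter_upwards [hGmem n] with ω hω using hle_sn ω _ hω
  have hqG : ∀ (q : StrongDual ℝ X) (n : ℕ), Integrable (fun ω => q (G n ω)) μ := fun q n =>
    q.integrable_comp (hGint n)
  have hqGbd : ∀ (q : StrongDual ℝ X) (n : ℕ), ∀ᵐ ω ∂μ, |q (G n ω)| ≤ ‖q‖ * snorm ω := by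
    intro q n
    filter_upwards [hGρ n] with ω hω
    calc |q (G n ω)| ≤ ‖q‖ * ‖G n ω‖ := q.le_opNorm _
    _ ≤ ‖q‖ * snorm ω := mul_le_mul_of_nonneg_left hω (norm_nonneg q)
  have hqGsfn : ∀ (q : StrongDual ℝ X) (n : ℕ), ∀ᵐ ω ∂μ, q (G n ω) ≤ sfn q ω := by
    intro q n
    filter_upwards [hGmem n] with ω hω using hle_sfn q ω _ hω
  -- uniform bounds on the set integrals
  have hIbd2 : ∀ (q : StrongDual ℝ X) (n : ℕ) (A : Set Ω),
      |∫ ω in A, q (G n ω) ∂μ| ≤ ∫ ω in A, ‖q‖ * snorm ω ∂μ := by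
    intro q n A
    calc |∫ ω in A, q (G n ω) ∂μ| ≤ ∫ ω in A, |q (G n ω)| ∂μ :=
        abs_integral_le _
    _ ≤ ∫ ω in A, ‖q‖ * snorm ω ∂μ :=
        setIntegral_mono_ae ((hqG q n).abs.integrableOn)
          ((hsnint.const_mul ‖q‖).integrableOn) (hqGbd q n)
  have hIbound : ∀ (q : StrongDual ℝ X) (n : ℕ) (A : Set Ω),
      |∫ ω in A, q (G n ω) ∂μ| ≤ ‖q‖ * ∫ ω, snorm ω ∂μ := by
    intro q n A
    have h1 := hIbd2 q n A
    have h2 : ∫ ω in A, ‖q‖ * snorm ω ∂μ ≤ ∫ ω, ‖q‖ * snorm ω ∂μ :=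
      setIntegral_le_integral (hsnint.const_mul ‖q‖)
        (Eventually.of_forall fun ω => mul_nonneg (norm_nonneg q) (hsn0 ω))
    have h3 : ∫ ω, ‖q‖ * snorm ω ∂μ = ‖q‖ * ∫ ω, snorm ω ∂μ := integral_const_mul _ _
    linarith
  -- ultrafilter limits of the set integrals
  set U : Ultrafilter ℕ := Ultrafilter.of atTop with hUdef
  have hUle : ↑U ≤ (atTop : Filter ℕ) := Ultrafilter.of_le _
  set θ : StrongDual ℝ X → Set Ω → ℝ :=
    fun q A => ulim U (fun n => ∫ ω in A, q (G n ω) ∂μ) with hθdef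
  have hθten : ∀ (q : StrongDual ℝ X) (A : Set Ω),
      Tendsto (fun n => ∫ ω in A, q (G n ω) ∂μ) ↑U (𝓝 (θ q A)) := fun q A =>
    tendsto_ulim (fun n => hIbound q n A)
  have hθbd2 : ∀ (q : StrongDual ℝ X) (A : Set Ω),
      |θ q A| ≤ ∫ ω in A, ‖q‖ * snorm ω ∂μ := by
    intro q A
    apply le_of_tendsto ((continuous_abs.tendsto _).comp (hθten q A))
    exact Eventually.of_forall fun n => hIbd2 q n A
  have hθnull : ∀ (q : StrongDual ℝ X) (A : Set Ω), μ A = 0 → θ q A = 0 := by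
    intro q A hA
    apply ulim_eq
    have hz : (fun n => ∫ ω in A, q (G n ω) ∂μ) = fun _ => (0:ℝ) := by
      ext n
      rw [Measure.restrict_eq_zero.2 hA, integral_zero_measure]
    rw [hz]
    exact tendsto_const_nhds
  have hθunion : ∀ (q : StrongDual ℝ X) {A B : Set Ω}, MeasurableSet B → Disjoint A B →
      θ q (A ∪ B) = θ q A + θ q B := by
    intro q A B hB hAB
    apply ulim_eq
    have h1 : (fun n => ∫ ω in A ∪ B, q (G n ω) ∂μ)
        = fun n => (∫ ω in A, q (G n ω) ∂μ) + ∫ ω in B, q (G n ω) ∂μ := by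
      ext n
      exact setIntegral_union hAB hB ((hqG q n).integrableOn) ((hqG q n).integrableOn)
    rw [h1]
    exact (hθten q A).add (hθten q B)
  have hθadd : ∀ (p q : StrongDual ℝ X) (A : Set Ω), θ (p + q) A = θ p A + θ q A := by
    intro p q A
    apply ulim_eq
    have h1 : (fun n => ∫ ω in A, (p + q) (G n ω) ∂μ)
        = fun n => (∫ ω in A, p (G n ω) ∂μ) + ∫ ω in A, q (G n ω) ∂μ := by
      ext n
      rw [← integral_add ((hqG p n).integrableOn) ((hqG q n).integrableOn)]
      apply integral_congr_ae
      exact Eventually.of_forall fun ω => by simp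
    rw [h1]
    exact (hθten p A).add (hθten q A)
  have hθsmul : ∀ (c : ℝ) (q : StrongDual ℝ X) (A : Set Ω), θ (c • q) A = c * θ q A := by
    intro c q A
    apply ulim_eq
    have h1 : (fun n => ∫ ω in A, (c • q) (G n ω) ∂μ)
        = fun n => c * ∫ ω in A, q (G n ω) ∂μ := by
      ext n
      rw [← integral_const_mul]
      apply integral_congr_ae
      exact Eventually.of_forall fun ω => by simp
    rw [h1]
    exact (hθten q A).const_mul c
  have hθmono : ∀ (q : StrongDual ℝ X) (A : Set Ω), θ q A ≤ ∫ ω in A, sfn q ω ∂μ := by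
    intro q A
    apply le_of_tendsto (hθten q A)
    apply Eventually.of_forall
    intro n
    exact setIntegral_mono_ae ((hqG q n).integrableOn)
      ((hsfnint q).integrableOn) (hqGsfn q n)
  -- Radon-Nikodym densities of the limit set functions
  have hsm : ∀ q : StrongDual ℝ X, ∃ Dq : Ω → ℝ, Integrable Dq μ ∧
      ∀ A : Set Ω, MeasurableSet A → ∫ ω in A, Dq ω ∂μ = θ q A := by
    intro q
    have hempty : θ q (∅ : Set Ω) = 0 := by
      apply ulim_eq
      have hz : (fun n => ∫ ω in (∅ : Set Ω), q (G n ω) ∂μ) = fun _ => (0:ℝ) := by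
        ext n; simp
      rw [hz]
      exact tendsto_const_nhds
    have hiUnion : ∀ ⦃A : ℕ → Set Ω⦄, (∀ i, MeasurableSet (A i)) →
        Pairwise (Function.onFun Disjoint A) →
        HasSum (fun i => θ q (A i)) (θ q (⋃ i, A i)) := by
      intro A hA hd
      set b : ℕ → ℝ := fun i => ∫ ω in A i, ‖q‖ * snorm ω ∂μ with hb
      have hsum0 : HasSum b (∫ ω in ⋃ i, A i, ‖q‖ * snorm ω ∂μ) :=
        hasSum_integral_iUnion hA hd ((hsnint.const_mul ‖q‖).integrableOn)
      have hsummable : Summable (fun i => θ q (A i)) := by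
        apply Summable.of_norm_bounded (g := b) hsum0.summable
        intro i
        rw [Real.norm_eq_abs]
        exact hθbd2 q (A i)
      rw [hsummable.hasSum_iff_tendsto_nat]
      -- decomposition into a partial sum plus a tail
      have htailm : ∀ N : ℕ, MeasurableSet (⋃ i, A (i + N)) :=
        fun N => MeasurableSet.iUnion fun i => hA (i + N)
      have hfin : ∀ N : ℕ, θ q (⋃ i, A i)
          = (∑ i ∈ Finset.range N, θ q (A i)) + θ q (⋃ i, A (i + N)) := by
        intro N
        induction N with
        | zero => simp
        | succ N ih =>
          have hsplit : (⋃ i, A (i + N)) = A N ∪ ⋃ i, A (i + (N + 1)) := by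
            ext ω
            simp only [Set.mem_iUnion, Set.mem_union]
            constructor
            · rintro ⟨i, hi⟩
              rcases i with _ | j
              · exact Or.inl (by simpa using hi)
              · exact Or.inr ⟨j, by convert hi using 2; omega⟩
            · rintro (h | ⟨j, hj⟩)
              · exact ⟨0, by simpa using h⟩
              · exact ⟨j + 1, by convert hj using 2; omega⟩
          have hdisj : Disjoint (A N) (⋃ i, A (i + (N + 1))) := by
            apply Set.disjoint_iUnion_right.2
            intro i
            exact hd (by omega)
          rw [ih, hsplit, hθunion q (MeasurableSet.iUnion fun i => hA (i + (N + 1))) hdisj,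
            Finset.sum_range_succ]
          ring
      have htail0 : Tendsto (fun N => θ q (⋃ i, A (i + N))) atTop (𝓝 0) := by
        have hbd : ∀ N, |θ q (⋃ i, A (i + N))| ≤ ∑' i, b (i + N) := by
          intro N
          have hs : HasSum (fun i => b (i + N)) (∫ ω in ⋃ i, A (i + N), ‖q‖ * snorm ω ∂μ) :=
            hasSum_integral_iUnion (fun i => hA (i + N))
              (fun i j hij => hd (by omega)) ((hsnint.const_mul ‖q‖).integrableOn)
          rw [hs.tsum_eq]
          exact hθbd2 q _
        have hbtail : Tendsto (fun N => ∑' i, b (i + N)) atTop (𝓝 0) :=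
          tendsto_sum_nat_add b
        apply squeeze_zero_norm _ hbtail
        intro N
        rw [Real.norm_eq_abs]
        exact hbd N
      have heq : ∀ N, ∑ i ∈ Finset.range N, θ q (A i)
          = θ q (⋃ i, A i) - θ q (⋃ i, A (i + N)) := by
        intro N; rw [hfin N]; ring
      rw [show (fun N => ∑ i ∈ Finset.range N, θ q (A i))
          = fun N => θ q (⋃ i, A i) - θ q (⋃ i, A (i + N)) from funext heq]
      have hconst : Tendsto (fun _ : ℕ => θ q (⋃ i, A i)) atTop (𝓝 (θ q (⋃ i, A i))) :=
        tendsto_const_nhds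
      simpa using hconst.sub htail0
    set ν : SignedMeasure Ω :=
      { measureOf' := fun A => if MeasurableSet A then θ q A else 0
        empty' := by
          show (if MeasurableSet (∅ : Set Ω) then θ q (∅ : Set Ω) else 0) = 0
          rw [if_pos MeasurableSet.empty]; exact hempty
        not_measurable' := fun A hA => if_neg hA
        m_iUnion' := by
          intro A hA hd
          show HasSum (fun i => if MeasurableSet (A i) then θ q (A i) else 0)
            (if MeasurableSet (⋃ i, A i) then θ q (⋃ i, A i) else 0)
          have h1 : (fun i => if MeasurableSet (A i) then θ q (A i) else 0)
              = fun i => θ q (A i) := by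
            ext i; rw [if_pos (hA i)]
          rw [h1, if_pos (MeasurableSet.iUnion hA)]
          exact hiUnion hA hd } with hν
    have hAC : ν ≪ᵥ μ.toENNRealVectorMeasure := by
      apply VectorMeasure.AbsolutelyContinuous.mk
      intro A hA h0
      rw [Measure.toENNRealVectorMeasure_apply_measurable hA] at h0
      show (if MeasurableSet A then θ q A else 0) = 0
      rw [if_pos hA]
      exact hθnull q A h0
    refine ⟨ν.rnDeriv μ, ν.integrable_rnDeriv μ, ?_⟩
    intro A hA
    have h1 := ν.withDensityᵥ_rnDeriv_eq μ hAC
    have h2 := withDensityᵥ_apply (ν.integrable_rnDeriv μ) hA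
    rw [h1] at h2
    rw [← h2]
    show (if MeasurableSet A then θ q A else 0) = θ q A
    rw [if_pos hA]
  choose Dq hDint hDset using hsm
  -- conditional expectations of the densities onto mt
  set Ψ : StrongDual ℝ X → Ω → ℝ := fun q => μ[Dq q | mt] with hΨdef
  have hΨsm : ∀ q : StrongDual ℝ X, StronglyMeasurable[mt] (Ψ q) := fun q =>
    stronglyMeasurable_condExp
  have hΨint : ∀ q : StrongDual ℝ X, Integrable (Ψ q) μ := fun q => integrable_condExp
  have hΨset : ∀ (q : StrongDual ℝ X) (A : Set Ω), MeasurableSet[mt] A →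
      ∫ ω in A, Ψ q ω ∂μ = θ q A := by
    intro q A hA
    have h1 : ∫ ω in A, (μ[Dq q | mt]) ω ∂μ = ∫ ω in A, Dq q ω ∂μ :=
      setIntegral_condExp hmt (hDint q) hA
    rw [hΨdef]
    rw [h1]
    exact hDset q A (hmt A hA)
  -- a.e. additivity in q
  have hΨadd : ∀ p q : StrongDual ℝ X, ∀ᵐ ω ∂μ, Ψ (p + q) ω = Ψ p ω + Ψ q ω := by
    intro p q
    have hD : Dq (p + q) =ᵐ[μ] Dq p + Dq q := by
      apply Integrable.ae_eq_of_forall_setIntegral_eq _ _ (hDint _) ((hDint p).add (hDint q))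
      intro A hA _
      simp only [Pi.add_apply]
      rw [hDset _ A hA, hθadd p q A, integral_add ((hDint p).integrableOn)
        ((hDint q).integrableOn), hDset p A hA, hDset q A hA]
    have h1 : Ψ (p + q) =ᵐ[μ] μ[Dq p + Dq q | mt] := condExp_congr_ae hD
    have h2 : μ[Dq p + Dq q | mt] =ᵐ[μ] μ[Dq p | mt] + μ[Dq q | mt] :=
      condExp_add (hDint p) (hDint q) mt
    filter_upwards [h1, h2] with ω hω1 hω2
    rw [hω1, hω2]
    simp [hΨdef]
  have hΨsmul : ∀ (c : ℝ) (q : StrongDual ℝ X), ∀ᵐ ω ∂μ, Ψ (c • q) ω = c * Ψ q ω := by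
    intro c q
    have hD : Dq (c • q) =ᵐ[μ] c • Dq q := by
      apply Integrable.ae_eq_of_forall_setIntegral_eq _ _ (hDint _) ((hDint q).smul c)
      intro A hA _
      simp only [Pi.smul_apply, smul_eq_mul]
      rw [hDset _ A hA, hθsmul c q A, integral_const_mul, hDset q A hA]
    have h1 : Ψ (c • q) =ᵐ[μ] μ[c • Dq q | mt] := condExp_congr_ae hD
    have h2 : μ[c • Dq q | mt] =ᵐ[μ] c • μ[Dq q | mt] := condExp_smul c (Dq q) mt
    filter_upwards [h1, h2] with ω hω1 hω2
    rw [hω1, hω2]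
    simp [hΨdef]
  -- a.e. bounds
  have hDub : ∀ q : StrongDual ℝ X, ∀ᵐ ω ∂μ, Dq q ω ≤ ‖q‖ * snorm ω := by
    intro q
    have h := ae_nonneg_of_forall_setIntegral_nonneg
      (f := fun ω => ‖q‖ * snorm ω - Dq q ω) (((hsnint.const_mul ‖q‖)).sub (hDint q)) ?_
    · filter_upwards [h] with ω hω
      simp only [Pi.zero_apply] at hω
      linarith
    · intro A hA _
      rw [integral_sub ((hsnint.const_mul ‖q‖).integrableOn) ((hDint q).integrableOn)]
      rw [hDset q A hA]
      have h1 := hθbd2 q A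
      rw [abs_le] at h1
      linarith [h1.2]
  have hDlb : ∀ q : StrongDual ℝ X, ∀ᵐ ω ∂μ, -(‖q‖ * snorm ω) ≤ Dq q ω := by
    intro q
    have h := ae_nonneg_of_forall_setIntegral_nonneg
      (f := fun ω => Dq q ω + ‖q‖ * snorm ω) ((hDint q).add (hsnint.const_mul ‖q‖)) ?_
    · filter_upwards [h] with ω hω
      simp only [Pi.zero_apply] at hω
      linarith
    · intro A hA _
      rw [integral_add ((hDint q).integrableOn) ((hsnint.const_mul ‖q‖).integrableOn)]
      rw [hDset q A hA]
      have h1 := hθbd2 q A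
      rw [abs_le] at h1
      linarith [h1.1]
  have hDsfn : ∀ q : StrongDual ℝ X, ∀ᵐ ω ∂μ, Dq q ω ≤ sfn q ω := by
    intro q
    have h := ae_nonneg_of_forall_setIntegral_nonneg
      (f := fun ω => sfn q ω - Dq q ω) ((hsfnint q).sub (hDint q)) ?_
    · filter_upwards [h] with ω hω
      simp only [Pi.zero_apply] at hω
      linarith
    · intro A hA _
      rw [integral_sub ((hsfnint q).integrableOn) ((hDint q).integrableOn)]
      rw [hDset q A hA]
      linarith [hθmono q A]
  -- transfer the bounds through the conditional expectation
  have hsnc : μ[snorm | mt] = snorm :=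
    condExp_of_stronglyMeasurable hmt (hsnm.stronglyMeasurable) hsnint
  have hΨub : ∀ q : StrongDual ℝ X, ∀ᵐ ω ∂μ, |Ψ q ω| ≤ snorm ω * ‖q‖ := by
    intro q
    have hub : μ[Dq q | mt] ≤ᵐ[μ] μ[fun ω => ‖q‖ * snorm ω | mt] :=
      condExp_mono (hDint q) (hsnint.const_mul ‖q‖) (hDub q)
    have hlb : μ[fun ω => -(‖q‖ * snorm ω) | mt] ≤ᵐ[μ] μ[Dq q | mt] :=
      condExp_mono ((hsnint.const_mul ‖q‖).neg) (hDint q) (hDlb q)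
    have hc1 : μ[fun ω => ‖q‖ * snorm ω | mt] = fun ω => ‖q‖ * snorm ω :=
      condExp_of_stronglyMeasurable hmt ((hsnm.const_mul ‖q‖).stronglyMeasurable)
        (hsnint.const_mul ‖q‖)
    have hc2 : μ[fun ω => -(‖q‖ * snorm ω) | mt] = fun ω => -(‖q‖ * snorm ω) :=
      condExp_of_stronglyMeasurable hmt (((hsnm.const_mul ‖q‖).neg).stronglyMeasurable)
        ((hsnint.const_mul ‖q‖).neg)
    rw [hc1] at hub
    rw [hc2] at hlb
    filter_upwards [hub, hlb] with ω h1 h2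
    rw [abs_le]
    constructor
    · have := h2
      simp only [hΨdef]
      nlinarith [this]
    · simp only [hΨdef]
      nlinarith [h1]
  have hΨsfn : ∀ q : StrongDual ℝ X, ∀ᵐ ω ∂μ, Ψ q ω ≤ sfn q ω := by
    intro q
    have hub : μ[Dq q | mt] ≤ᵐ[μ] μ[sfn q | mt] :=
      condExp_mono (hDint q) (hsfnint q) (hDsfn q)
    have hc1 : μ[sfn q | mt] = sfn q :=
      condExp_of_stronglyMeasurable hmt ((hsfnm q).stronglyMeasurable) (hsfnint q)
    rw [hc1] at hub
    exact hub
  -- the good set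
  set G₀ : Set Ω := {ω | (∀ p ∈ Q, ∀ q ∈ Q, Ψ (p + q) ω = Ψ p ω + Ψ q ω) ∧
      (∀ (c : ℚ), ∀ q ∈ Q, Ψ ((c : ℝ) • q) ω = (c : ℝ) * Ψ q ω) ∧
      (∀ q ∈ Q, |Ψ q ω| ≤ snorm ω * ‖q‖) ∧
      (∀ q ∈ Q, Ψ q ω ≤ sfn q ω)} with hG₀def
  have hG₀meas : MeasurableSet[mt] G₀ := by
    have h1 : G₀ = (⋂ p ∈ Q, ⋂ q ∈ Q, {ω | Ψ (p + q) ω = Ψ p ω + Ψ q ω}) ∩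
        ((⋂ (c : ℚ), ⋂ q ∈ Q, {ω | Ψ ((c : ℝ) • q) ω = (c : ℝ) * Ψ q ω}) ∩
        ((⋂ q ∈ Q, {ω | |Ψ q ω| ≤ snorm ω * ‖q‖}) ∩
        (⋂ q ∈ Q, {ω | Ψ q ω ≤ sfn q ω}))) := by
      ext ω
      simp only [hG₀def, Set.mem_setOf_eq, Set.mem_inter_iff, Set.mem_iInter]
    rw [h1]
    refine wInter ?_ (wInter ?_ (wInter ?_ ?_))
    · exact wBiInter hQc fun p _ => wBiInter hQc fun q _ =>
        wMeasSet_eq (hΨsm _).measurable (wAdd (hΨsm p).measurable (hΨsm q).measurable)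
    · exact wIInter fun c => wBiInter hQc fun q _ =>
        wMeasSet_eq (hΨsm _).measurable (wConstMul (hΨsm q).measurable _)
    · exact wBiInter hQc fun q _ =>
        wMeasSet_le (wAbs (hΨsm q).measurable) (wMulConst hsnm _)
    · exact wBiInter hQc fun q _ =>
        wMeasSet_le (hΨsm q).measurable (hsfnm q)
  have hG₀ae : ∀ᵐ ω ∂μ, ω ∈ G₀ := by
    have h1 : ∀ᵐ ω ∂μ, ∀ p ∈ Q, ∀ q ∈ Q, Ψ (p + q) ω = Ψ p ω + Ψ q ω := by
      rw [ae_ball_iff hQc]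
      intro p _
      rw [ae_ball_iff hQc]
      intro q _
      exact hΨadd p q
    have h2 : ∀ᵐ ω ∂μ, ∀ (c : ℚ), ∀ q ∈ Q, Ψ ((c : ℝ) • q) ω = (c : ℝ) * Ψ q ω := by
      rw [ae_all_iff]
      intro c
      rw [ae_ball_iff hQc]
      intro q _
      exact hΨsmul c q
    have h3 : ∀ᵐ ω ∂μ, ∀ q ∈ Q, |Ψ q ω| ≤ snorm ω * ‖q‖ := by
      rw [ae_ball_iff hQc]
      intro q _
      exact hΨub q
    have h4 : ∀ᵐ ω ∂μ, ∀ q ∈ Q, Ψ q ω ≤ sfn q ω := by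
      rw [ae_ball_iff hQc]
      intro q _
      exact hΨsfn q
    filter_upwards [h1, h2, h3, h4] with ω hω1 hω2 hω3 hω4
    exact ⟨hω1, hω2, hω3, hω4⟩
  -- pointwise reconstruction of the selection
  have hrec : ∀ ω ∈ G₀, ∃ x : X, ‖x‖ ≤ snorm ω ∧ ∀ q ∈ Q, q x = Ψ q ω := by
    intro ω hω
    have hω' : ω ∈ {ω | (∀ p ∈ Q, ∀ q ∈ Q, Ψ (p + q) ω = Ψ p ω + Ψ q ω) ∧
      (∀ (c : ℚ), ∀ q ∈ Q, Ψ ((c : ℝ) • q) ω = (c : ℝ) * Ψ q ω) ∧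
      (∀ q ∈ Q, |Ψ q ω| ≤ snorm ω * ‖q‖) ∧
      (∀ q ∈ Q, Ψ q ω ≤ sfn q ω)} := by rw [← hG₀def]; exact hω
    obtain ⟨h1, h2, h3, _⟩ := hω'
    exact reconstruct hrefl hQd hQadd hQsmul (fun q => Ψ q ω) (snorm ω) (hsn0 ω)
      (fun p hp q hq => h1 p hp q hq) (fun c q hq => h2 c q hq)
      (fun q hq => by exact h3 q hq)

  choose! xf hxn hxq using hrec
  have hG₀sfn : ∀ ω ∈ G₀, ∀ q ∈ Q, Ψ q ω ≤ sfn q ω := by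
    intro ω hω
    have hω' : ω ∈ {ω | (∀ p ∈ Q, ∀ q ∈ Q, Ψ (p + q) ω = Ψ p ω + Ψ q ω) ∧
      (∀ (c : ℚ), ∀ q ∈ Q, Ψ ((c : ℝ) • q) ω = (c : ℝ) * Ψ q ω) ∧
      (∀ q ∈ Q, |Ψ q ω| ≤ snorm ω * ‖q‖) ∧
      (∀ q ∈ Q, Ψ q ω ≤ sfn q ω)} := by rw [← hG₀def]; exact hω
    exact hω'.2.2.2
  set g : Ω → X := fun ω => if ω ∈ G₀ then xf ω else 0 with hgdef
  -- measurability of all dual pairings with g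
  have hgq : ∀ y : StrongDual ℝ X, Measurable[mt] fun ω => y (g ω) := by
    intro y
    obtain ⟨u, huQ, hulim⟩ := mem_closure_iff_seq_limit.1 (hQd y)
    have hm : ∀ n : ℕ, Measurable[mt] (G₀.indicator (fun ω => Ψ (u n) ω)) :=
      fun n => wIndicator ((hΨsm (u n)).measurable) hG₀meas
    apply wTendsto hm
    intro ω
    by_cases hω : ω ∈ G₀
    · have hgω : y (g ω) = y (xf ω) := by rw [hgdef]; simp only [if_pos hω]
      have hseqeq : (fun n => G₀.indicator (fun ω' => Ψ (u n) ω') ω)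
          = fun n => (u n) (xf ω) := by
        ext n
        rw [Set.indicator_of_mem hω]
        exact (hxq ω hω (u n) (huQ n)).symm
      rw [hgω, hseqeq]
      have hsq : ∀ n, ‖(u n) (xf ω) - y (xf ω)‖ ≤ ‖u n - y‖ * ‖xf ω‖ := by
        intro n
        have heq3 : (u n) (xf ω) - y (xf ω) = (u n - y) (xf ω) := by simp
        rw [heq3]
        exact (u n - y).le_opNorm _
      have hn0 : Tendsto (fun n => ‖u n - y‖ * ‖xf ω‖) atTop (𝓝 0) := by
        have h1 : Tendsto (fun n => u n - y) atTop (𝓝 0) := by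
          simpa using hulim.sub (tendsto_const_nhds (x := y))
        have h2 := (continuous_norm.tendsto (0 : StrongDual ℝ X)).comp h1
        simp only [norm_zero] at h2
        simpa using h2.mul_const ‖xf ω‖
      have hz : Tendsto (fun n => (u n) (xf ω) - y (xf ω)) atTop (𝓝 0) :=
        squeeze_zero_norm hsq hn0
      exact tendsto_sub_nhds_zero_iff.1 hz
    · have hgω : y (g ω) = 0 := by rw [hgdef]; simp only [if_neg hω, map_zero]
      have hseqeq : (fun n => G₀.indicator (fun ω' => Ψ (u n) ω') ω)
          = fun _ => (0 : ℝ) := by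
        ext n
        exact Set.indicator_of_notMem hω _
      rw [hgω, hseqeq]
      exact tendsto_const_nhds
  -- measurability of g
  haveI hQ1c : Countable {q : StrongDual ℝ X // q ∈ Q ∧ ‖q‖ ≤ 1} := by
    have h1 : {q : StrongDual ℝ X | q ∈ Q ∧ ‖q‖ ≤ 1}.Countable := hQc.mono fun q hq => hq.1
    exact h1.to_subtype
  have hgdist : ∀ c : X, Measurable[mt] fun ω => ‖g ω - c‖ := by
    intro c
    have hrep : (fun ω => ‖g ω - c‖)
        = fun ω => ⨆ q : {q : StrongDual ℝ X // q ∈ Q ∧ ‖q‖ ≤ 1}, (q.1 (g ω) - q.1 c) := by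
      ext ω
      rw [norm_eq_ciSup hQd hQ0 hQsmul (g ω - c)]
      congr 1
      ext q
      rw [map_sub]
    rw [hrep]
    apply wISup
    intro q
    exact wSubConst (hgq q.1) _
  have hgmeas : Measurable[mt] g := by
    haveI : Nonempty X := ⟨0⟩
    set cs : ℕ → X := TopologicalSpace.denseSeq X with hcs
    have hcsd : DenseRange cs := TopologicalSpace.denseRange_denseSeq X
    apply wOfIsOpen
    intro Uo hUo
    have hcover : g ⁻¹' Uo = ⋃ (p : ℕ × ℚ), ⋃ (_ : 0 < (p.2 : ℝ) ∧
        Metric.ball (cs p.1) (3 * (p.2 : ℝ)) ⊆ Uo), {ω | ‖g ω - cs p.1‖ < (p.2 : ℝ)} := by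
      ext ω
      simp only [Set.mem_preimage, Set.mem_iUnion, Set.mem_setOf_eq]
      constructor
      · intro hgU
        obtain ⟨ε, hε0, hball⟩ := Metric.isOpen_iff.1 hUo _ hgU
        obtain ⟨r, hr1, hr2⟩ := exists_rat_btwn (show (0:ℝ) < ε/4 by positivity)
        obtain ⟨i, hi⟩ := hcsd.exists_dist_lt (g ω) hr1
        refine ⟨(i, r), ⟨hr1, ?_⟩, ?_⟩
        · intro z hz
          apply hball
          rw [Metric.mem_ball] at hz ⊢
          have ht : dist z (g ω) ≤ dist z (cs i) + dist (cs i) (g ω) := dist_triangle _ _ _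
          have hd2 : dist (cs i) (g ω) < (r : ℝ) := by rwa [dist_comm]
          linarith
        · rw [← dist_eq_norm]
          exact hi
      · rintro ⟨p, ⟨hp0, hpU⟩, hω⟩
        apply hpU
        rw [Metric.mem_ball, dist_eq_norm]
        linarith
    rw [hcover]
    apply wIUnion
    intro p
    apply wIUnion
    intro _
    exact wMeasSet_lt_const (hgdist (cs p.1)) _
  have hgSM : StronglyMeasurable[mt] g := by
    haveI := UniformSpace.secondCountable_of_separable X
    exact wSM hgmeas
  -- g is a selection a.e.
  have hgmem : ∀ᵐ ω ∂μ, g ω ∈ FF ω := by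
    filter_upwards [hG₀ae] with ω hω
    have hgω : g ω = xf ω := by rw [hgdef]; simp only [if_pos hω]
    rw [hgω]
    by_contra hx
    obtain ⟨y, u0, hyu, huy⟩ := geometric_hahn_banach_closed_point (hFcv ω) (hFcl ω) hx
    have hsfny : sfn y ω ≤ u0 :=
      csSup_le ((hFne ω).image _) (by rintro z ⟨x0, hx0, rfl⟩; exact (hyu x0 hx0).le)
    obtain ⟨u, huQ, hulim⟩ := mem_closure_iff_seq_limit.1 (hQd y)
    have hseq : ∀ n, (u n) (xf ω) ≤ sfn y ω + ‖u n - y‖ * snorm ω := by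
      intro n
      rw [hxq ω hω (u n) (huQ n)]
      calc Ψ (u n) ω ≤ sfn (u n) ω := hG₀sfn ω hω (u n) (huQ n)
      _ ≤ sfn y ω + ‖u n - y‖ * snorm ω := hsfn_lip y (u n) ω
    have hlim1 : Tendsto (fun n => (u n) (xf ω)) atTop (𝓝 (y (xf ω))) := by
      have hsq : ∀ n, ‖(u n) (xf ω) - y (xf ω)‖ ≤ ‖u n - y‖ * ‖xf ω‖ := by
        intro n
        have heq3 : (u n) (xf ω) - y (xf ω) = (u n - y) (xf ω) := by simp
        rw [heq3]
        exact (u n - y).le_opNorm _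
      have hn0 : Tendsto (fun n => ‖u n - y‖ * ‖xf ω‖) atTop (𝓝 0) := by
        have h1 : Tendsto (fun n => u n - y) atTop (𝓝 0) := by
          simpa using hulim.sub (tendsto_const_nhds (x := y))
        have h2 := (continuous_norm.tendsto (0 : StrongDual ℝ X)).comp h1
        simp only [norm_zero] at h2
        simpa using h2.mul_const ‖xf ω‖
      exact tendsto_sub_nhds_zero_iff.1 (squeeze_zero_norm hsq hn0)
    have hlim2 : Tendsto (fun n => sfn y ω + ‖u n - y‖ * snorm ω) atTop
        (𝓝 (sfn y ω + 0 * snorm ω)) := by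
      apply Tendsto.add tendsto_const_nhds
      apply Tendsto.mul_const
      have h1 : Tendsto (fun n => u n - y) atTop (𝓝 0) := by
        simpa using hulim.sub (tendsto_const_nhds (x := y))
      have h2 := (continuous_norm.tendsto (0 : StrongDual ℝ X)).comp h1
      simpa [Function.comp_def] using h2
    have hfinal := le_of_tendsto_of_tendsto' hlim1 hlim2 hseq
    rw [zero_mul, add_zero] at hfinal
    linarith
  -- integrability
  have hgbd : ∀ ω, ‖g ω‖ ≤ snorm ω := by
    intro ω
    rw [hgdef]
    by_cases hω : ω ∈ G₀
    · simp only [if_pos hω]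
      exact hxn ω hω
    · simp only [if_neg hω, norm_zero]
      exact hsn0 ω
  have hgint : Integrable g μ :=
    Integrable.mono' hsnint ((hgSM.mono hmt).aestronglyMeasurable)
      (Eventually.of_forall hgbd)
  refine ⟨g, hgSM, hgint, hgmem, ?_⟩
  -- the set-integral identity
  intro A hA
  have hAm : MeasurableSet A := hms A hA
  have hAt : MeasurableSet[mt] A := hsmt A hA
  have hqeq : ∀ q ∈ Q, q (∫ ω in A, g ω ∂μ) = q (∫ ω in A, f ω ∂μ) := by
    intro q hq
    have h1 : q (∫ ω in A, g ω ∂μ) = ∫ ω in A, q (g ω) ∂μ :=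
      (q.integral_comp_comm (hgint.integrableOn)).symm
    have h2 : ∫ ω in A, q (g ω) ∂μ = ∫ ω in A, Ψ q ω ∂μ := by
      apply setIntegral_congr_ae hAm
      filter_upwards [hG₀ae] with ω hω _
      have hgω : g ω = xf ω := by rw [hgdef]; simp only [if_pos hω]
      rw [hgω]
      exact hxq ω hω q hq
    have h3 : ∫ ω in A, Ψ q ω ∂μ = θ q A := hΨset q A hAt
    have h4 : Tendsto (fun n => ∫ ω in A, q (G n ω) ∂μ) atTop
        (𝓝 (q (∫ ω in A, f ω ∂μ))) := by
      have h5 : (fun n => ∫ ω in A, q (G n ω) ∂μ)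
          = fun n => q (∫ ω in A, G n ω ∂μ) := by
        ext n
        exact q.integral_comp_comm ((hGint n).integrableOn)
      rw [h5]
      exact (q.continuous.tendsto _).comp (hflim A hA)
    have h6 : θ q A = q (∫ ω in A, f ω ∂μ) := ulim_eq (h4.mono_left hUle)
    rw [h1, h2, h3, h6]
  by_contra hne
  have hv : (∫ ω in A, g ω ∂μ) - (∫ ω in A, f ω ∂μ) ≠ 0 := sub_ne_zero.2 hne
  set v : X := (∫ ω in A, g ω ∂μ) - ∫ ω in A, f ω ∂μ with hvdef
  obtain ⟨φ0, hφ1, hφ2⟩ := exists_dual_vector ℝ v (norm_ne_zero_iff.2 hv)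
  have hφv : φ0 v = ‖v‖ := by exact_mod_cast hφ2
  have hvpos : (0:ℝ) < ‖v‖ := norm_pos_iff.2 hv
  obtain ⟨q, hqQ, hqd⟩ := Metric.mem_closure_iff.1 (hQd φ0) (1/2) (by norm_num)
  have hqv0 : q v = 0 := by
    rw [hvdef, map_sub, hqeq q hqQ, sub_self]
  have hclose : |q v - φ0 v| ≤ (1/2) * ‖v‖ := by
    have heq3 : q v - φ0 v = (q - φ0) v := by simp
    rw [heq3, ← Real.norm_eq_abs]
    calc ‖(q - φ0) v‖ ≤ ‖q - φ0‖ * ‖v‖ := (q - φ0).le_opNorm v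
    _ ≤ (1/2) * ‖v‖ := by
        apply mul_le_mul_of_nonneg_right _ (norm_nonneg v)
        rw [← dist_eq_norm, dist_comm]
        exact hqd.le
  rw [hqv0, hφv] at hclose
  rw [abs_sub_comm, abs_of_nonneg (by linarith : (0:ℝ) ≤ ‖v‖ - 0)] at hclose
  linarith


end Stmt9Aux

/-- for a set-valued `𝔽`-submartingale with bounded closed convex values
in a separable reflexive Banach space, `S_{F_s}(ℱ s) ⊆ {E[f|ℱ s] : f ∈ S_{F_t}(ℱ t)}`
(no closure needed): every selection of `F_s` extends to a selection of `F_t` whose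
conditional expectation is the chosen selection. -/
theorem stmt_9 {Ω X : Type*} {m : MeasurableSpace Ω} (μ : @MeasureTheory.Measure Ω m)
    [IsProbabilityMeasure μ]
    [NormedAddCommGroup X] [NormedSpace ℝ X] [CompleteSpace X]
    [TopologicalSpace.SeparableSpace X] [MeasurableSpace X] [BorelSpace X]
    (hrefl : IsReflexive X)
    (ℱ : MeasureTheory.Filtration ℝ≥0 m) (F : ℝ≥0 → Ω → Set X)
    (s t : ℝ≥0) (hst : s ≤ t)
    (hsv : ∀ u, IsSVRV (ℱ u) (F u))
    (hval : ∀ u ω, IsBounded (F u ω) ∧ Convex ℝ (F u ω))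
    (hbdd : ∀ u, ∃ ρ : Ω → ℝ, Integrable ρ μ ∧ ∀ ω, ∀ x ∈ F u ω, ‖x‖ ≤ ρ ω)
    (hsub : sel (ℱ s) μ 1 (F s) ⊆ closure (ceSel (ℱ s) μ 1 (sel (ℱ t) μ 1 (F t)))) :
    sel (ℱ s) μ 1 (F s) ⊆ ceSel (ℱ s) μ 1 (sel (ℱ t) μ 1 (F t)) := by
  intro f hf
  classical
  have hms : ℱ s ≤ m := ℱ.le s
  have hmt : ℱ t ≤ m := ℱ.le t
  have hsmt : ℱ s ≤ ℱ t := ℱ.mono hst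
  haveI : SigmaFinite (μ.trim hms) := by
    haveI : IsFiniteMeasure (μ.trim hms) := isFiniteMeasure_trim hms
    infer_instance
  obtain ⟨ρ, hρint, hρbd⟩ := hbdd t
  obtain ⟨y, hymem, hylim⟩ := mem_closure_iff_seq_limit.1 (hsub hf)
  choose G hGsel hGce using hymem
  have hGmeas : ∀ n, AEStronglyMeasurable[ℱ t] (G n : Ω → X) μ := fun n => (hGsel n).1
  have hGmem : ∀ n, ∀ᵐ ω ∂μ, (G n : Ω → X) ω ∈ F t ω := fun n => (hGsel n).2
  have hGint : ∀ n, Integrable ((G n : Ω → X)) μ := fun n => L1.integrable_coeFn (G n)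
  have hfint : Integrable ((f : Ω → X)) μ := L1.integrable_coeFn f
  have hflim : ∀ A : Set Ω, MeasurableSet[ℱ s] A →
      Tendsto (fun n => ∫ ω in A, (G n : Ω → X) ω ∂μ) atTop
        (𝓝 (∫ ω in A, (f : Ω → X) ω ∂μ)) := by
    intro A hA
    have hAm : MeasurableSet A := hms A hA
    have h1 : ∀ n, ∫ ω in A, (G n : Ω → X) ω ∂μ = ∫ ω in A, (y n : Ω → X) ω ∂μ := by
      intro n
      rw [← setIntegral_condExp hms (hGint n) hA]
      apply setIntegral_congr_ae hAm
      filter_upwards [hGce n] with ω hω _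
      exact hω.symm
    rw [show (fun n => ∫ ω in A, (G n : Ω → X) ω ∂μ)
        = fun n => ∫ ω in A, (y n : Ω → X) ω ∂μ from funext h1]
    have h3 : ∀ n, ‖(∫ ω in A, (y n : Ω → X) ω ∂μ) - ∫ ω in A, (f : Ω → X) ω ∂μ‖
        ≤ ‖y n - f‖ := by
      intro n
      have hyint : Integrable ((y n : Ω → X)) μ := L1.integrable_coeFn (y n)
      rw [← integral_sub (hyint.integrableOn) (hfint.integrableOn)]
      calc ‖∫ ω in A, ((y n : Ω → X) ω - (f : Ω → X) ω) ∂μ‖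
          ≤ ∫ ω in A, ‖(y n : Ω → X) ω - (f : Ω → X) ω‖ ∂μ :=
            norm_integral_le_integral_norm _
      _ ≤ ∫ ω, ‖(y n : Ω → X) ω - (f : Ω → X) ω‖ ∂μ :=
            setIntegral_le_integral (hyint.sub hfint).norm
              (Eventually.of_forall fun ω => norm_nonneg _)
      _ = ‖y n - f‖ := by
            rw [L1.norm_eq_integral_norm (y n - f)]
            apply integral_congr_ae
            filter_upwards [Lp.coeFn_sub (y n) f] with ω hω
            rw [hω]
            simp
    have h4 : Tendsto (fun n => ‖y n - f‖) atTop (𝓝 0) := by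
      have := tendsto_iff_dist_tendsto_zero.1 hylim
      simpa [dist_eq_norm] using this
    exact tendsto_sub_nhds_zero_iff.1 (squeeze_zero_norm h3 h4)
  obtain ⟨g, hgSM, hgint, hgmem, hgeq⟩ :=
    Stmt9Aux.key hrefl hms hmt hsmt
      (fun ω => ((hsv t).1 ω).1) (fun ω => ((hsv t).1 ω).2) (fun ω => (hval t ω).2)
      (hsv t).2 hρint (fun ω x hx => hρbd ω x hx) hGmeas hGmem hGint hflim
  have hgmem1 : MemLp g 1 μ := memLp_one_iff_integrable.mpr hgint
  have hgLae : ⇑(hgmem1.toLp g) =ᵐ[μ] g := hgmem1.coeFn_toLp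
  refine ⟨hgmem1.toLp g, ⟨⟨g, hgSM, hgLae⟩, ?_⟩, ?_⟩
  · filter_upwards [hgLae, hgmem] with ω h1 h2
    rw [h1]; exact h2
  · have hgLint : Integrable (⇑(hgmem1.toLp g)) μ := L1.integrable_coeFn _
    apply ae_eq_condExp_of_forall_setIntegral_eq hms hgLint
    · intro A _ _
      exact hfint.integrableOn
    · intro A hA _
      have h5 : ∫ ω in A, (hgmem1.toLp g : Ω → X) ω ∂μ = ∫ ω in A, g ω ∂μ :=
        setIntegral_congr_ae (hms A hA) (hgLae.mono fun ω h _ => h)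
      rw [h5, hgeq A hA]
    · exact hf.1
end
end

section
/- Let f, g be real-valued L²-martingales with f_0 = g_0 = 0 a.s. and f ≠ g. Define F_t = cl{λ f_t + (1−λ) g_t : λ ∈ [0,1] ∩ ℚ}. Then F_t = [min{f_t,g_t}, max{f_t,g_t}] for all t, F_0 = {0} a.s., (F_t) is a set-valued submartingale, and (F_t) is NOT a set-valued martingale (it is non-degenerate for t with P(f_t ≠ g_t) > 0). -/
open MeasureTheory Set Filter Topology Bornology
open scoped ENNReal NNReal Pointwise

noncomputable section

lemma convex_mem_Icc (lam a b : ℝ) (h0 : 0 ≤ lam) (h1 : lam ≤ 1) :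
    lam * a + (1 - lam) * b ∈ Icc (min a b) (max a b) := by
  have h1a := min_le_left a b
  have h1b := min_le_right a b
  have h2a := le_max_left a b
  have h2b := le_max_right a b
  constructor <;> nlinarith

lemma closure_ratseg (a b : ℝ) :
    closure {y : ℝ | ∃ q : ℚ, (q : ℝ) ∈ Icc (0:ℝ) 1 ∧ y = q * a + (1 - q) * b} =
      Icc (min a b) (max a b) := by
  apply Subset.antisymm
  · refine closure_minimal ?_ isClosed_Icc
    rintro y ⟨q, ⟨hq0, hq1⟩, rfl⟩
    exact convex_mem_Icc _ _ _ hq0 hq1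
  · intro x hx
    obtain ⟨lam, hlam0, hlam1, hlx⟩ :
        ∃ lam : ℝ, 0 ≤ lam ∧ lam ≤ 1 ∧ x = lam * a + (1 - lam) * b := by
      rcases lt_trichotomy a b with hab | hab | hab
      · rw [min_eq_left hab.le, max_eq_right hab.le] at hx
        refine ⟨(b - x) / (b - a), div_nonneg (by linarith [hx.2]) (by linarith),
          (div_le_one (by linarith)).2 (by linarith [hx.1]), ?_⟩
        have hne : b - a ≠ 0 := ne_of_gt (by linarith)
        field_simp
        ring
      · subst hab
        refine ⟨0, le_refl _, zero_le_one, by simpa using (by simpa using hx : x = a)⟩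
      · rw [min_eq_right hab.le, max_eq_left hab.le] at hx
        refine ⟨(x - b) / (a - b), div_nonneg (by linarith [hx.1]) (by linarith),
          (div_le_one (by linarith)).2 (by linarith [hx.2]), ?_⟩
        have hne : a - b ≠ 0 := ne_of_gt (by linarith)
        field_simp
        ring
    have hlam_cl : lam ∈ closure (Set.range ((↑) : ℚ → ℝ)) := by
      rw [Rat.denseRange_cast.closure_eq]; trivial
    obtain ⟨u, hu_mem, hu_tendsto⟩ := mem_closure_iff_seq_limit.1 hlam_cl
    choose r hr using hu_mem
    set s : ℕ → ℚ := fun n => min 1 (max 0 (r n)) with hs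
    have hs_cast : ∀ n, ((s n : ℝ)) = min 1 (max 0 (u n)) := by
      intro n
      push_cast [hs]
      rw [hr n]
    have hs_tendsto : Tendsto (fun n => ((s n : ℝ))) atTop (𝓝 lam) := by
      have h1 : Tendsto (fun n => min 1 (max 0 (u n))) atTop (𝓝 (min 1 (max 0 lam))) :=
        tendsto_const_nhds.min (tendsto_const_nhds.max hu_tendsto)
      rw [max_eq_right hlam0, min_eq_right hlam1] at h1
      simpa [hs_cast] using h1
    apply mem_closure_iff_seq_limit.2
    refine ⟨fun n => (s n : ℝ) * a + (1 - (s n : ℝ)) * b, fun n => ⟨s n, ?_, rfl⟩, ?_⟩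
    · rw [hs_cast n]
      exact ⟨le_min zero_le_one (le_max_left _ _), min_le_left _ _⟩
    · rw [hlx]
      exact (hs_tendsto.mul tendsto_const_nhds).add
        ((tendsto_const_nhds.sub hs_tendsto).mul tendsto_const_nhds)


/-- Example: for distinct `L²`-martingales `f, g` with `f_0 = g_0 = 0`,
the process `F_t = cl{λ f_t + (1-λ) g_t : λ ∈ [0,1] ∩ ℚ}` equals
`[min{f_t,g_t}, max{f_t,g_t}]`, satisfies `F_0 = {0}` a.s., is a set-valued submartingale,
and is not a set-valued martingale. -/
theorem stmt_11 {Ω : Type*} {m : MeasurableSpace Ω} (μ : @MeasureTheory.Measure Ω m)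
    [IsProbabilityMeasure μ]
    (ℱ : MeasureTheory.Filtration ℝ≥0 m) (f g : ℝ≥0 → Ω → ℝ)
    (hf : Martingale f ℱ μ) (hg : Martingale g ℱ μ)
    (hL2 : ∀ t, MemLp (f t) 2 μ ∧ MemLp (g t) 2 μ)
    (hf0 : f 0 =ᵐ[μ] 0) (hg0 : g 0 =ᵐ[μ] 0)
    (hne : ∃ t, 0 < μ {ω | f t ω ≠ g t ω})
    (F : ℝ≥0 → Ω → Set ℝ)
    (hFdef : ∀ t ω, F t ω =
      closure {y | ∃ q : ℚ, (q : ℝ) ∈ Icc (0:ℝ) 1 ∧ y = q * f t ω + (1 - q) * g t ω}) :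
    (∀ t ω, F t ω = Icc (min (f t ω) (g t ω)) (max (f t ω) (g t ω))) ∧
    (∀ᵐ ω ∂μ, F 0 ω = {0}) ∧
    SVSubmartingale ℱ μ 1 F ∧
    ¬ SVMartingale ℱ μ 1 F := by
  classical
  have hFIcc : ∀ t ω, F t ω = Icc (min (f t ω) (g t ω)) (max (f t ω) (g t ω)) := by
    intro t ω; rw [hFdef t ω, closure_ratseg]
  have hF0 : ∀ᵐ ω ∂μ, F 0 ω = {0} := by
    filter_upwards [hf0, hg0] with ω h1 h2
    rw [hFIcc 0 ω]
    simp only [Pi.zero_apply] at h1 h2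
    rw [h1, h2]
    simp
  have hfint : ∀ t, Integrable (f t) μ := fun t => hf.integrable t
  have hgint : ∀ t, Integrable (g t) μ := fun t => hg.integrable t
  -- Submartingale property
  have hsub : SVSubmartingale ℱ μ 1 F := by
    intro s t hst h hh
    obtain ⟨hh1, hh2⟩ := hh
    set h' := hh1.mk ⇑h with hh'_def
    have hh'meas : StronglyMeasurable[ℱ s] h' := hh1.stronglyMeasurable_mk
    have hh'ae : ⇑h =ᵐ[μ] h' := hh1.ae_eq_mk
    set lam : Ω → ℝ := fun ω =>
      min 1 (max 0 (if f s ω = g s ω then 0 else (h' ω - g s ω) / (f s ω - g s ω)))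
      with hlam_def
    have hlam0 : ∀ ω, 0 ≤ lam ω := fun ω => le_min zero_le_one (le_max_left _ _)
    have hlam1 : ∀ ω, lam ω ≤ 1 := fun ω => min_le_left _ _
    have hfsm : Measurable[ℱ s] (f s) := (hf.stronglyAdapted s).measurable
    have hgsm : Measurable[ℱ s] (g s) := (hg.stronglyAdapted s).measurable
    have hlam_meas : StronglyMeasurable[ℱ s] lam := by
      apply Measurable.stronglyMeasurable
      apply Measurable.min measurable_const
      apply Measurable.max measurable_const
      exact Measurable.ite (measurableSet_eq_fun hfsm hgsm) measurable_const
        ((hh'meas.measurable.sub hgsm).div (hfsm.sub hgsm))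
    -- key a.e. identity at time s
    have key : ∀ᵐ ω ∂μ, h ω = lam ω * f s ω + (1 - lam ω) * g s ω := by
      filter_upwards [hh2, hh'ae] with ω hmem heq
      rw [hFIcc s ω] at hmem
      by_cases hfg : f s ω = g s ω
      · have hlam : lam ω = 0 := by simp [hlam_def, hfg]
        rw [hfg, min_self, max_self, Icc_self, mem_singleton_iff] at hmem
        rw [hlam, hmem, hfg]; ring
      · have hd : f s ω - g s ω ≠ 0 := sub_ne_zero.mpr hfg
        set lam0 := (h' ω - g s ω) / (f s ω - g s ω) with hlam0def
        have hmem' : h' ω ∈ Icc (min (f s ω) (g s ω)) (max (f s ω) (g s ω)) := heq ▸ hmem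
        have hb : 0 ≤ lam0 ∧ lam0 ≤ 1 := by
          rcases lt_or_gt_of_ne (fun hc => hfg hc) with hab | hab
          · rw [min_eq_left hab.le, max_eq_right hab.le] at hmem'
            have hrw : lam0 = (g s ω - h' ω) / (g s ω - f s ω) := by
              rw [hlam0def, ← neg_div_neg_eq]; ring_nf
            rw [hrw]
            exact ⟨div_nonneg (by linarith [hmem'.2]) (by linarith),
              (div_le_one (by linarith)).2 (by linarith [hmem'.1])⟩
          · rw [min_eq_right hab.le, max_eq_left hab.le] at hmem'
            exact ⟨div_nonneg (by linarith [hmem'.1]) (by linarith),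
              (div_le_one (by linarith)).2 (by linarith [hmem'.2])⟩
        have hlam : lam ω = lam0 := by
          simp only [hlam_def, if_neg hfg]
          rw [max_eq_right hb.1, min_eq_right hb.2]
        have hc : lam0 * (f s ω - g s ω) = h' ω - g s ω := div_mul_cancel₀ _ hd
        have : lam0 * f s ω + (1 - lam0) * g s ω = g s ω + lam0 * (f s ω - g s ω) := by ring
        rw [hlam, this, hc, heq]; ring
    set A : Ω → ℝ := fun ω => lam ω * f t ω with hA_def
    set B : Ω → ℝ := fun ω => (1 - lam ω) * g t ω with hB_def
    set φ : Ω → ℝ := fun ω => A ω + B ω with hφ_def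
    have hlamt : StronglyMeasurable[ℱ t] lam := hlam_meas.mono (ℱ.mono hst)
    have hφmeas : StronglyMeasurable[ℱ t] φ :=
      (hlamt.mul (hf.stronglyAdapted t)).add ((stronglyMeasurable_const.sub hlamt).mul (hg.stronglyAdapted t))
    have hAbd : ∀ ω, ‖A ω‖ ≤ ‖f t ω‖ := fun ω => by
      rw [hA_def]; simp only [norm_mul, Real.norm_eq_abs, abs_of_nonneg (hlam0 ω)]
      exact mul_le_of_le_one_left (abs_nonneg _) (hlam1 ω)
    have hBbd : ∀ ω, ‖B ω‖ ≤ ‖g t ω‖ := fun ω => by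
      rw [hB_def]; simp only [norm_mul, Real.norm_eq_abs,
        abs_of_nonneg (by linarith [hlam1 ω] : (0:ℝ) ≤ 1 - lam ω)]
      exact mul_le_of_le_one_left (abs_nonneg _) (by linarith [hlam0 ω])
    have hlam_m : AEStronglyMeasurable lam μ :=
      (hlam_meas.mono (ℱ.le s)).aestronglyMeasurable
    have hAint : Integrable A μ :=
      Integrable.mono' (hfint t).norm
        (hlam_m.mul (hfint t).aestronglyMeasurable) (Eventually.of_forall hAbd)
    have hBint : Integrable B μ :=
      Integrable.mono' (hgint t).norm
        ((aestronglyMeasurable_const.sub hlam_m).mul (hgint t).aestronglyMeasurable)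
        (Eventually.of_forall hBbd)
    have hφint : Integrable φ μ := hAint.add hBint
    set φL : Lp ℝ 1 μ := (memLp_one_iff_integrable.mpr hφint).toLp φ with hφL
    have hφLae : ⇑φL =ᵐ[μ] φ := MemLp.coeFn_toLp _
    have hφLsel : φL ∈ sel (ℱ t) μ 1 (F t) := by
      refine ⟨⟨φ, hφmeas, hφLae⟩, ?_⟩
      filter_upwards [hφLae] with ω hω
      rw [hω, hFIcc t ω]
      exact convex_mem_Icc _ _ _ (hlam0 ω) (hlam1 ω)
    -- conditional expectation computation
    have h1 : μ[⇑φL|ℱ s] =ᵐ[μ] μ[φ|ℱ s] := condExp_congr_ae hφLae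
    have h2 : μ[φ|ℱ s] =ᵐ[μ] μ[A|ℱ s] + μ[B|ℱ s] := condExp_add hAint hBint _
    have h3 : μ[A|ℱ s] =ᵐ[μ] lam * μ[f t|ℱ s] :=
      condExp_mul_of_stronglyMeasurable_left hlam_meas hAint (hfint t)
    have h4 : μ[B|ℱ s] =ᵐ[μ] (fun ω => 1 - lam ω) * μ[g t|ℱ s] :=
      condExp_mul_of_stronglyMeasurable_left (stronglyMeasurable_const.sub hlam_meas) hBint (hgint t)
    have h5 := hf.condExp_ae_eq hst
    have h6 := hg.condExp_ae_eq hst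
    have hce : ⇑h =ᵐ[μ] μ[⇑φL|ℱ s] := by
      filter_upwards [h1, h2, h3, h4, h5, h6, key] with ω e1 e2 e3 e4 e5 e6 ekey
      rw [e1, e2, Pi.add_apply, e3, e4, Pi.mul_apply, Pi.mul_apply, e5, e6, ekey]
    exact subset_closure ⟨φL, hφLsel, hce⟩
  refine ⟨hFIcc, hF0, hsub, ?_⟩
  -- not a martingale
  intro hM
  obtain ⟨t, ht⟩ := hne
  set d : Ω → ℝ := fun ω => f t ω - g t ω with hd_def
  have hdint : Integrable d μ := (hfint t).sub (hgint t)
  have hdmeas : Measurable[ℱ t] d :=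
    (hf.stronglyAdapted t).measurable.sub (hg.stronglyAdapted t).measurable
  -- any piecewise selection has integral 0
  have hkey : ∀ C : Set Ω, MeasurableSet[ℱ t] C →
      ∫ ω, C.piecewise (f t) (g t) ω ∂μ = 0 := by
    intro C hC
    set φ : Ω → ℝ := C.piecewise (f t) (g t) with hφ
    have hφmeas : StronglyMeasurable[ℱ t] φ :=
      StronglyMeasurable.piecewise hC (hf.stronglyAdapted t) (hg.stronglyAdapted t)
    have hφint : Integrable φ μ := by
      refine Integrable.mono' ((hfint t).norm.add (hgint t).norm)
        (hφmeas.mono (ℱ.le t)).aestronglyMeasurable (Eventually.of_forall fun ω => ?_)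
      by_cases hω : ω ∈ C
      · simpa [hφ, Set.piecewise, hω] using le_add_of_nonneg_right (norm_nonneg (g t ω))
      · simpa [hφ, Set.piecewise, hω] using le_add_of_nonneg_left (norm_nonneg (f t ω))
    set φL : Lp ℝ 1 μ := (memLp_one_iff_integrable.mpr hφint).toLp φ with hφL
    have hφLae : ⇑φL =ᵐ[μ] φ := MemLp.coeFn_toLp _
    have hφLsel : φL ∈ sel (ℱ t) μ 1 (F t) := by
      refine ⟨⟨φ, hφmeas, hφLae⟩, ?_⟩
      filter_upwards [hφLae] with ω hω
      rw [hω, hFIcc t ω, hφ]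
      by_cases hωC : ω ∈ C
      · simp only [Set.piecewise, if_pos hωC]
        exact ⟨min_le_left _ _, le_max_left _ _⟩
      · simp only [Set.piecewise, if_neg hωC]
        exact ⟨min_le_right _ _, le_max_right _ _⟩
    have hceint : Integrable (μ[φ|ℱ 0]) μ := integrable_condExp
    set k : Lp ℝ 1 μ := (memLp_one_iff_integrable.mpr hceint).toLp _ with hk
    have hkae : ⇑k =ᵐ[μ] μ[φ|ℱ 0] := MemLp.coeFn_toLp _
    have hkce : k ∈ ceSel (ℱ 0) μ 1 (sel (ℱ t) μ 1 (F t)) :=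
      ⟨φL, hφLsel, hkae.trans (condExp_congr_ae hφLae).symm⟩
    have hksel : k ∈ sel (ℱ 0) μ 1 (F 0) := by
      rw [hM 0 t (show (0:ℝ≥0) ≤ t from zero_le)]
      exact subset_closure hkce
    have hk0 : ⇑k =ᵐ[μ] 0 := by
      filter_upwards [hksel.2, hF0] with ω h1 h2
      rw [h2] at h1; simpa using h1
    have hik : ∫ ω, k ω ∂μ = 0 := by
      rw [integral_congr_ae hk0]; simp
    calc ∫ ω, φ ω ∂μ = ∫ ω, (μ[φ|ℱ 0]) ω ∂μ := (integral_condExp (ℱ.le 0)).symm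
      _ = ∫ ω, k ω ∂μ := (integral_congr_ae hkae).symm
      _ = 0 := hik
  -- positivity of the integral of an indicator
  have hindpos : ∀ (e : Ω → ℝ), Integrable e μ → ∀ C : Set Ω, MeasurableSet C →
      (∀ ω ∈ C, 0 < e ω) → 0 < μ C → 0 < ∫ ω, C.indicator e ω ∂μ := by
    intro e he C hC hpos hμC
    have hnn : 0 ≤ᵐ[μ] C.indicator e := Eventually.of_forall fun ω => by
      by_cases hω : ω ∈ C
      · simpa [Set.indicator_of_mem hω] using (hpos ω hω).le
      · simp [Set.indicator_of_notMem hω]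
    have hint : Integrable (C.indicator e) μ := he.indicator hC
    rw [integral_pos_iff_support_of_nonneg_ae hnn hint]
    have hsupp : Function.support (C.indicator e) = C ∩ Function.support e :=
      Set.support_indicator
    have : C ⊆ Function.support (C.indicator e) := by
      rw [hsupp]
      exact fun ω hω => ⟨hω, ne_of_gt (hpos ω hω)⟩
    exact lt_of_lt_of_le hμC (measure_mono this)
  -- d has a strict sign on a set of positive measure
  have hpos : 0 < μ {ω | 0 < d ω} ∨ 0 < μ {ω | d ω < 0} := by
    by_contra hcon
    push_neg at hcon
    obtain ⟨h1, h2⟩ := hcon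
    have hsub' : {ω | f t ω ≠ g t ω} ⊆ {ω | 0 < d ω} ∪ {ω | d ω < 0} := by
      intro ω hω
      rcases lt_or_gt_of_ne (sub_ne_zero.mpr hω) with h | h
      · exact Or.inr h
      · exact Or.inl h
    have : μ {ω | f t ω ≠ g t ω} ≤ μ {ω | 0 < d ω} + μ {ω | d ω < 0} :=
      le_trans (measure_mono hsub') (measure_union_le _ _)
    rw [le_zero_iff.1 h1, le_zero_iff.1 h2] at this
    simp at this
    exact absurd this (ne_of_gt ht)
  have hg0int : ∫ ω, g t ω ∂μ = 0 := by
    have h1 : ∫ ω, (μ[g t|ℱ 0]) ω ∂μ = ∫ ω, g t ω ∂μ := integral_condExp (ℱ.le 0)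
    have h2 : μ[g t|ℱ 0] =ᵐ[μ] (0 : Ω → ℝ) := (hg.condExp_ae_eq (show (0:ℝ≥0) ≤ t from zero_le)).trans hg0
    rw [← h1, integral_congr_ae h2]; simp
  -- in both cases the piecewise integral equals ∫ g t + ∫ indicator d
  have hsplit : ∀ C : Set Ω, MeasurableSet C →
      ∫ ω, C.piecewise (f t) (g t) ω ∂μ = ∫ ω, g t ω ∂μ + ∫ ω, C.indicator d ω ∂μ := by
    intro C hC
    rw [← integral_add (hgint t) (hdint.indicator hC)]
    refine integral_congr_ae (Eventually.of_forall fun ω => ?_)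
    by_cases hω : ω ∈ C
    · simp only [Set.piecewise, if_pos hω, Set.indicator_of_mem hω, hd_def]; ring
    · simp only [Set.piecewise, if_neg hω, Set.indicator_of_notMem hω, add_zero]
  rcases hpos with hc1 | hc2
  · set C := {ω | 0 < d ω} with hC_def
    have hCm : MeasurableSet[ℱ t] C := measurableSet_lt measurable_const hdmeas
    have h1 := hkey C hCm
    rw [hsplit C (ℱ.le t _ hCm), hg0int, zero_add] at h1
    have h2 := hindpos d hdint C (ℱ.le t _ hCm) (fun ω hω => hω) hc1
    linarith
  · set C := {ω | d ω < 0} with hC_def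
    have hCm : MeasurableSet[ℱ t] C := measurableSet_lt hdmeas measurable_const
    have h1 := hkey C hCm
    rw [hsplit C (ℱ.le t _ hCm), hg0int, zero_add] at h1
    have h2 := hindpos (fun ω => -d ω) hdint.neg C (ℱ.le t _ hCm)
      (fun ω hω => neg_pos.mpr hω) hc2
    have h3 : ∫ ω, C.indicator (fun ω => -d ω) ω ∂μ = -∫ ω, C.indicator d ω ∂μ := by
      rw [← integral_neg]
      refine integral_congr_ae (Eventually.of_forall fun ω => ?_)
      by_cases hω : ω ∈ C <;> simp [Set.indicator_of_mem, Set.indicator_of_notMem, hω]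
    rw [h3] at h2
    linarith
end
end
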